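/- arXiv:quant-ph/0204079 — 4 statements merged into one kernel-verified Lean document; each statement's English description precedes it below -/
import Mathlib

section
/- (Completeness of ℋ) Let (F_m) be a sequence in ℋ such that ‖(F_m − F_n)∘σ_λ‖_λ → 0 as m, n → ∞, uniformly over λ ∈ 𝒫. Then there exists F ∈ ℋ such that ‖(F − F_m)∘σ_λ‖_λ → 0 as m → ∞, uniformly over λ ∈ 𝒫; in particular ‖F − F_m‖_ℋ → 0. -/
open MeasureTheory Filter Matrix

noncomputable section

/-- The Dirac representation gamma matrices. -/
def gmm : Fin 4 → Matrix (Fin 4) (Fin 4) ℂ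
  | 0 => !![1, 0, 0, 0; 0, 1, 0, 0; 0, 0, -1, 0; 0, 0, 0, -1]
  | 1 => !![0, 0, 0, 1; 0, 0, 1, 0; 0, -1, 0, 0; -1, 0, 0, 0]
  | 2 => !![0, 0, 0, -Complex.I; 0, 0, Complex.I, 0; 0, Complex.I, 0, 0; -Complex.I, 0, 0, 0]
  | 3 => !![0, 0, 1, 0; 0, 0, 0, -1; -1, 0, 0, 0; 0, 1, 0, 0]

/-- Euclidean norm on ℝ³. -/
def enorm3 (v : Fin 3 → ℝ) : ℝ := Real.sqrt (∑ i, v i ^ 2)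

/-- Euclidean dot product on ℝ³. -/
def dot3 (v w : Fin 3 → ℝ) : ℝ := ∑ i, v i * w i

/-- Squared Euclidean norm |v|² = v†v on ℂ⁴. -/
def cnorm2 (v : Fin 4 → ℂ) : ℝ := ∑ i, Complex.normSq (v i)

/-- Rotation by the angle |φ| around the axis φ/|φ| (Rodrigues formula); identity for φ = 0. -/
def rot3 (φ u : Fin 3 → ℝ) : Fin 3 → ℝ :=
  if enorm3 φ = 0 then u
  else
    Real.cos (enorm3 φ) • u
      + Real.sin (enorm3 φ) • (crossProduct ((enorm3 φ)⁻¹ • φ) u)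
      + ((1 - Real.cos (enorm3 φ)) * dot3 ((enorm3 φ)⁻¹ • φ) u) • ((enorm3 φ)⁻¹ • φ)

/-- The parameter set 𝒫. -/
structure Param where
  y : Fin 4 → ℝ
  α : Fin 3 → ℝ
  φ : Fin 3 → ℝ
  hα : enorm3 α < 1
  hφ : enorm3 φ < Real.pi

/-- The hyperplane parametrization σ_λ(u) = (y⁰ + α·(R_φ u), y⃗ + R_φ u). -/
def hplane (l : Param) (u : Fin 3 → ℝ) : Fin 4 → ℝ :=
  Fin.cons (l.y 0 + dot3 l.α (rot3 l.φ u)) (fun i => l.y i.succ + rot3 l.φ u i)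

/-- The matrix I − γ⁰ (γ¹α₁ + γ²α₂ + γ³α₃). -/
def gmat (α : Fin 3 → ℝ) : Matrix (Fin 4) (Fin 4) ℂ :=
  1 - gmm 0 * (∑ k : Fin 3, (α k : ℂ) • gmm k.succ)

/-- The scalar product ⟨f|g⟩_λ = ∫ f(u)† (I − γ⁰γ⃗·α) g(u) du. -/
def innerL (α : Fin 3 → ℝ) (f g : (Fin 3 → ℝ) → Fin 4 → ℂ) : ℂ :=
  ∫ u : Fin 3 → ℝ, dotProduct (star (f u)) ((gmat α).mulVec (g u))

/-- The norm ‖f‖_λ = √⟨f|f⟩_λ. -/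
def normL (α : Fin 3 → ℝ) (f : (Fin 3 → ℝ) → Fin 4 → ℂ) : ℝ :=
  Real.sqrt (innerL α f f).re

/-- Minkowski signs, used to lower indices: A_μ = (A⁰, −A¹, −A², −A³). -/
def minkSign : Fin 4 → ℝ := ![1, -1, -1, -1]

/-- The left-hand side of the Dirac equation
(i γ^μ ∂_μ − (q/(chb)) γ^μ A_μ − mc/hb) Ψ(x), with summation over μ = 0,1,2,3. -/
def diracLHS (m c hb q : ℝ) (A : (Fin 4 → ℝ) → Fin 4 → ℝ)
    (Ψ : (Fin 4 → ℝ) → Fin 4 → ℂ) (x : Fin 4 → ℝ) : Fin 4 → ℂ :=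
  Complex.I • (∑ μ : Fin 4, (gmm μ).mulVec (fderiv ℝ Ψ x (Pi.single μ 1)))
    - ((q / (c * hb) : ℝ) : ℂ) •
        (∑ μ : Fin 4, ((minkSign μ * A x μ : ℝ) : ℂ) • (gmm μ).mulVec (Ψ x))
    - ((m * c / hb : ℝ) : ℂ) • Ψ x

/-- Membership in the space ℌ (with charge q and potential A). -/
def memH (m c hb q : ℝ) (A : (Fin 4 → ℝ) → Fin 4 → ℝ)
    (Ψ : (Fin 4 → ℝ) → Fin 4 → ℂ) : Prop :=
  ContDiff ℝ 1 Ψ ∧ (∀ x, diracLHS m c hb q A Ψ x = 0) ∧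
    (∀ l : Param, MemLp (fun u => Ψ (hplane l u)) 2 volume) ∧
    (∀ l : Param,
      Tendsto (fun u => enorm3 u ^ 3 * cnorm2 (Ψ (hplane l u))) (cocompact (Fin 3 → ℝ))
        (nhds 0))

/-- Membership in the completion ℋ (with charge q and potential A). -/
def memHH (m c hb q : ℝ) (A : (Fin 4 → ℝ) → Fin 4 → ℝ)
    (F : (Fin 4 → ℝ) → Fin 4 → ℂ) : Prop :=
  Measurable F ∧ (∀ l : Param, MemLp (fun u => F (hplane l u)) 2 volume) ∧
    ∃ Ψs : ℕ → ((Fin 4 → ℝ) → Fin 4 → ℂ), (∀ k, memH m c hb q A (Ψs k)) ∧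
      ∀ ε > 0, ∃ N : ℕ, ∀ k ≥ N, ∀ l : Param,
        normL l.α (fun u => F (hplane l u) - Ψs k (hplane l u)) < ε

/-- A fixed default parameter λ₀ = (0, 0, 0) ∈ 𝒫. -/
def param0 : Param :=
  ⟨0, 0, 0, by norm_num [enorm3], by simpa [enorm3] using Real.pi_pos⟩

/-- The λ-independent scalar product on ℋ, evaluated via the default parameter. -/
def innerH (F G : (Fin 4 → ℝ) → Fin 4 → ℂ) : ℂ :=
  innerL param0.α (fun u => F (hplane param0 u)) (fun u => G (hplane param0 u))

/-- The norm on ℋ. -/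
def normH (F : (Fin 4 → ℝ) → Fin 4 → ℂ) : ℝ := Real.sqrt (innerH F F).re


open scoped ENNReal NNReal

set_option maxHeartbeats 4000000

namespace SixAux


theorem gmat_eq (α : Fin 3 → ℝ) : gmat α =
    !![1, 0, -(α 2:ℂ), -(α 0:ℂ)+(α 1:ℂ)*Complex.I;
       0, 1, -(α 0:ℂ)-(α 1:ℂ)*Complex.I, (α 2:ℂ);
       -(α 2:ℂ), -(α 0:ℂ)+(α 1:ℂ)*Complex.I, 1, 0;
       -(α 0:ℂ)-(α 1:ℂ)*Complex.I, (α 2:ℂ), 0, 1] := by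
  have hs : (∑ k : Fin 3, (α k : ℂ) • gmm k.succ)
      = (α 0 : ℂ) • gmm 1 + (α 1 : ℂ) • gmm 2 + (α 2 : ℂ) • gmm 3 := by
    rw [Fin.sum_univ_three]; rfl
  rw [gmat, hs]
  show (1 : Matrix (Fin 4) (Fin 4) ℂ) -
      !![1, 0, 0, 0; 0, 1, 0, 0; 0, 0, -1, 0; 0, 0, 0, -1] *
        ((α 0 : ℂ) • !![0, 0, 0, 1; 0, 0, 1, 0; 0, -1, 0, 0; -1, 0, 0, 0]
          + (α 1 : ℂ) • !![0, 0, 0, -Complex.I; 0, 0, Complex.I, 0; 0, Complex.I, 0, 0; -Complex.I, 0, 0, 0]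
          + (α 2 : ℂ) • !![0, 0, 1, 0; 0, 0, 0, -1; -1, 0, 0, 0; 0, 1, 0, 0]) = _
  ext i j
  fin_cases i <;> fin_cases j <;>
    simp [Matrix.mul_apply, Fin.sum_univ_four, Matrix.one_apply, Matrix.vecHead,
      Matrix.vecTail] <;> ring

/-- lower-block image under the Pauli matrix combination. -/
def bvec (α : Fin 3 → ℝ) (v : Fin 4 → ℂ) : Fin 2 → ℂ :=
  ![(α 2:ℂ) * v 2 + ((α 0:ℂ) - (α 1:ℂ)*Complex.I) * v 3,
    ((α 0:ℂ) + (α 1:ℂ)*Complex.I) * v 2 - (α 2:ℂ) * v 3]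

theorem qform_complex (α : Fin 3 → ℝ) (v : Fin 4 → ℂ) :
    star v ⬝ᵥ (gmat α).mulVec v
      = ((cnorm2 v : ℝ) : ℂ)
        - ((starRingEnd ℂ (v 0) * bvec α v 0 + starRingEnd ℂ (v 1) * bvec α v 1)
           + starRingEnd ℂ (starRingEnd ℂ (v 0) * bvec α v 0 + starRingEnd ℂ (v 1) * bvec α v 1)) := by
  rw [gmat_eq]
  simp [dotProduct, Matrix.mulVec, Fin.sum_univ_four, cnorm2, bvec,
    Complex.normSq_eq_conj_mul_self, _root_.map_mul, map_add, map_sub, Complex.conj_conj,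
    Complex.conj_ofReal, Complex.conj_I]
  ring

/-- real quadratic form. -/
def qre (α : Fin 3 → ℝ) (v : Fin 4 → ℂ) : ℝ := (star v ⬝ᵥ (gmat α).mulVec v).re

theorem qre_eq (α : Fin 3 → ℝ) (v : Fin 4 → ℂ) :
    qre α v = cnorm2 v
      - 2 * (starRingEnd ℂ (v 0) * bvec α v 0 + starRingEnd ℂ (v 1) * bvec α v 1).re := by
  rw [qre, qform_complex]
  simp [Complex.add_re, Complex.sub_re, Complex.conj_re]
  ring

theorem bvec_normSq (α : Fin 3 → ℝ) (v : Fin 4 → ℂ) :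
    Complex.normSq (bvec α v 0) + Complex.normSq (bvec α v 1)
      = (α 0 ^ 2 + α 1 ^ 2 + α 2 ^ 2) * (Complex.normSq (v 2) + Complex.normSq (v 3)) := by
  simp [bvec, Complex.normSq_apply, Complex.add_re, Complex.add_im, Complex.sub_re,
    Complex.sub_im, Complex.mul_re, Complex.mul_im, Complex.ofReal_re, Complex.ofReal_im,
    Complex.I_re, Complex.I_im]
  ring

theorem twice_re_le (t : ℝ) (ht : 0 < t) (a w : ℂ) :
    2 * (starRingEnd ℂ a * w).re ≤ t * Complex.normSq a + t⁻¹ * Complex.normSq w := by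
  have key : t * (t * Complex.normSq a + t⁻¹ * Complex.normSq w - 2 * (starRingEnd ℂ a * w).re)
      = (t * a.re - w.re) ^ 2 + (t * a.im - w.im) ^ 2 := by
    field_simp [Complex.normSq_apply, Complex.mul_re, Complex.conj_re, Complex.conj_im]
    simp only [Complex.mul_re, Complex.conj_re, Complex.conj_im, Complex.normSq_apply]
    ring
  nlinarith [sq_nonneg (t * a.re - w.re), sq_nonneg (t * a.im - w.im), ht]

theorem enorm3_nonneg (v : Fin 3 → ℝ) : 0 ≤ enorm3 v := Real.sqrt_nonneg _

theorem enorm3_sq (v : Fin 3 → ℝ) : enorm3 v ^ 2 = v 0 ^ 2 + v 1 ^ 2 + v 2 ^ 2 := by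
  rw [enorm3, Real.sq_sqrt (by positivity), Fin.sum_univ_three]

theorem cnorm2_eq (v : Fin 4 → ℂ) :
    cnorm2 v = Complex.normSq (v 0) + Complex.normSq (v 1) + Complex.normSq (v 2)
      + Complex.normSq (v 3) := by
  rw [cnorm2, Fin.sum_univ_four]

theorem cnorm2_nonneg (v : Fin 4 → ℂ) : 0 ≤ cnorm2 v :=
  Finset.sum_nonneg fun _ _ => Complex.normSq_nonneg _

theorem abs_cross_le (α : Fin 3 → ℝ) (hα : enorm3 α < 1) (v : Fin 4 → ℂ) :
    |2 * (starRingEnd ℂ (v 0) * bvec α v 0 + starRingEnd ℂ (v 1) * bvec α v 1).re|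
      ≤ enorm3 α * cnorm2 v := by
  set s := enorm3 α with hs
  have hs0 : 0 ≤ s := enorm3_nonneg α
  rcases eq_or_lt_of_le hs0 with h0 | hpos
  · -- s = 0 : α = 0, bvec = 0
    have hsq : α 0 ^ 2 + α 1 ^ 2 + α 2 ^ 2 = 0 := by rw [← enorm3_sq, ← hs, ← h0]; ring
    have h1 : α 0 = 0 := by nlinarith [sq_nonneg (α 0), sq_nonneg (α 1), sq_nonneg (α 2)]
    have h2 : α 1 = 0 := by nlinarith [sq_nonneg (α 0), sq_nonneg (α 1), sq_nonneg (α 2)]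
    have h3 : α 2 = 0 := by nlinarith [sq_nonneg (α 0), sq_nonneg (α 1), sq_nonneg (α 2)]
    simp [bvec, h1, h2, h3, ← h0]
  · -- s > 0
    have hsum : Complex.normSq (bvec α v 0) + Complex.normSq (bvec α v 1)
        = s ^ 2 * (Complex.normSq (v 2) + Complex.normSq (v 3)) := by
      rw [bvec_normSq, ← enorm3_sq, hs]
    have hb0 := twice_re_le s hpos (v 0) (bvec α v 0)
    have hb1 := twice_re_le s hpos (v 1) (bvec α v 1)
    have hb0' := twice_re_le s hpos (-(v 0)) (bvec α v 0)
    have hb1' := twice_re_le s hpos (-(v 1)) (bvec α v 1)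
    have hkey : s⁻¹ * (Complex.normSq (bvec α v 0) + Complex.normSq (bvec α v 1))
        = s * (Complex.normSq (v 2) + Complex.normSq (v 3)) := by
      rw [hsum]; field_simp
    rw [abs_le, cnorm2_eq]
    simp only [Complex.add_re]
    constructor
    · simp only [map_neg, neg_mul, Complex.neg_re, Complex.normSq_neg] at hb0' hb1'
      linarith [hb0', hb1', hkey]
    · linarith [hb0, hb1, hkey]

theorem qre_lower (α : Fin 3 → ℝ) (hα : enorm3 α < 1) (v : Fin 4 → ℂ) :
    (1 - enorm3 α) * cnorm2 v ≤ qre α v := by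
  have h := abs_cross_le α hα v
  rw [abs_le] at h
  rw [qre_eq]
  nlinarith [h.1, h.2]

theorem qre_upper (α : Fin 3 → ℝ) (hα : enorm3 α < 1) (v : Fin 4 → ℂ) :
    qre α v ≤ 2 * cnorm2 v := by
  have h := abs_cross_le α hα v
  rw [abs_le] at h
  have := cnorm2_nonneg v
  have := enorm3_nonneg α
  rw [qre_eq]
  nlinarith [h.1]

theorem qre_nonneg (α : Fin 3 → ℝ) (hα : enorm3 α < 1) (v : Fin 4 → ℂ) : 0 ≤ qre α v := by
  have h1 := qre_lower α hα v
  have h2 := cnorm2_nonneg v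
  have h3 := enorm3_nonneg α
  nlinarith

theorem cnorm2_le_inv_qre (α : Fin 3 → ℝ) (hα : enorm3 α < 1) (v : Fin 4 → ℂ) :
    cnorm2 v ≤ (1 - enorm3 α)⁻¹ * qre α v := by
  have h1 : 0 < 1 - enorm3 α := by linarith
  have h2 := qre_lower α hα v
  calc cnorm2 v = (1 - enorm3 α)⁻¹ * ((1 - enorm3 α) * cnorm2 v) := by field_simp
    _ ≤ (1 - enorm3 α)⁻¹ * qre α v :=
        mul_le_mul_of_nonneg_left h2 (inv_nonneg.mpr h1.le)

theorem norm_sq_le_cnorm2 (v : Fin 4 → ℂ) : ‖v‖ ^ 2 ≤ cnorm2 v := by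
  have h : ‖v‖ ≤ Real.sqrt (cnorm2 v) := by
    rw [pi_norm_le_iff_of_nonneg (Real.sqrt_nonneg _)]
    intro i
    rw [Complex.norm_def]
    exact Real.sqrt_le_sqrt (Finset.single_le_sum
      (fun j _ => Complex.normSq_nonneg (v j)) (Finset.mem_univ i))
  calc ‖v‖ ^ 2 ≤ Real.sqrt (cnorm2 v) ^ 2 := by
        exact pow_le_pow_left₀ (norm_nonneg v) h 2
    _ = cnorm2 v := Real.sq_sqrt (cnorm2_nonneg v)




theorem dot_expand (A : Matrix (Fin 4) (Fin 4) ℂ) (v w : Fin 4 → ℂ) (c : ℂ) :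
    star (v + c • w) ⬝ᵥ A.mulVec (v + c • w)
      = star v ⬝ᵥ A.mulVec v + c * (star v ⬝ᵥ A.mulVec w)
        + starRingEnd ℂ c * (star w ⬝ᵥ A.mulVec v)
        + (starRingEnd ℂ c * c) * (star w ⬝ᵥ A.mulVec w) := by
  simp [star_add, star_smul, Matrix.mulVec_add, Matrix.mulVec_smul, add_dotProduct,
    dotProduct_add, smul_dotProduct, dotProduct_smul, smul_eq_mul,
    RCLike.star_def]
  ring

theorem dot_norm_le (A : Matrix (Fin 4) (Fin 4) ℂ) (v w : Fin 4 → ℂ) :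
    ‖star v ⬝ᵥ A.mulVec w‖ ≤ (∑ i, ∑ j, ‖A i j‖) * (‖v‖ * ‖w‖) := by
  have h1 : star v ⬝ᵥ A.mulVec w = ∑ i, ∑ j, starRingEnd ℂ (v i) * (A i j * w j) := by
    simp [dotProduct, Matrix.mulVec, Finset.mul_sum, RCLike.star_def]
  rw [h1]
  calc ‖∑ i, ∑ j, starRingEnd ℂ (v i) * (A i j * w j)‖
      ≤ ∑ i, ‖∑ j, starRingEnd ℂ (v i) * (A i j * w j)‖ := norm_sum_le _ _
    _ ≤ ∑ i, ∑ j, ‖starRingEnd ℂ (v i) * (A i j * w j)‖ :=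
        Finset.sum_le_sum fun i _ => norm_sum_le _ _
    _ ≤ ∑ i, ∑ j, ‖A i j‖ * (‖v‖ * ‖w‖) := by
        refine Finset.sum_le_sum fun i _ => Finset.sum_le_sum fun j _ => ?_
        rw [norm_mul, norm_mul, RCLike.norm_conj]
        calc ‖v i‖ * (‖A i j‖ * ‖w j‖) = ‖A i j‖ * (‖v i‖ * ‖w j‖) := by ring
          _ ≤ ‖A i j‖ * (‖v‖ * ‖w‖) := by
              refine mul_le_mul_of_nonneg_left ?_ (norm_nonneg _)
              exact mul_le_mul (norm_le_pi_norm v i) (norm_le_pi_norm w j)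
                (norm_nonneg _) (norm_nonneg _)
    _ = (∑ i, ∑ j, ‖A i j‖) * (‖v‖ * ‖w‖) := by
        rw [Finset.sum_mul]
        exact Finset.sum_congr rfl fun i _ => (Finset.sum_mul _ _ _).symm

theorem cont_dot (A : Matrix (Fin 4) (Fin 4) ℂ) :
    Continuous fun p : (Fin 4 → ℂ) × (Fin 4 → ℂ) => star p.1 ⬝ᵥ A.mulVec p.2 := by
  simp only [dotProduct, Matrix.mulVec, Fin.sum_univ_four, Pi.star_apply]
  have hs : Continuous (star : ℂ → ℂ) := continuous_star
  fun_prop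


variable {f g : (Fin 3 → ℝ) → Fin 4 → ℂ}

theorem cont_qre (α : Fin 3 → ℝ) : Continuous fun v : Fin 4 → ℂ => qre α v :=
  Complex.continuous_re.comp ((cont_dot (gmat α)).comp (continuous_id.prodMk continuous_id))

theorem aesm_dot (A : Matrix (Fin 4) (Fin 4) ℂ)
    (hf : AEStronglyMeasurable f (volume : Measure (Fin 3 → ℝ)))
    (hg : AEStronglyMeasurable g volume) :
    AEStronglyMeasurable (fun u => star (f u) ⬝ᵥ A.mulVec (g u)) volume :=
  (cont_dot A).comp_aestronglyMeasurable (hf.prodMk hg)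

theorem integrable_norm_mul (hf : MemLp f 2 (volume : Measure (Fin 3 → ℝ)))
    (hg : MemLp g 2 volume) :
    Integrable (fun u => ‖f u‖ * ‖g u‖) volume := by
  have h2 : ((2 : ℝ≥0∞)).toReal = (2 : ℝ) := by simp
  have hf2 : Integrable (fun u => ‖f u‖ ^ (2 : ℕ)) volume := by
    have := hf.integrable_norm_rpow two_ne_zero ENNReal.ofNat_ne_top
    rw [h2] at this
    simpa [Real.rpow_natCast] using this
  have hg2 : Integrable (fun u => ‖g u‖ ^ (2 : ℕ)) volume := by
    have := hg.integrable_norm_rpow two_ne_zero ENNReal.ofNat_ne_top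
    rw [h2] at this
    simpa [Real.rpow_natCast] using this
  refine Integrable.mono' (hf2.add hg2) (hf.1.norm.mul hg.1.norm) ?_
  filter_upwards with u
  rw [Real.norm_eq_abs, abs_of_nonneg (mul_nonneg (norm_nonneg _) (norm_nonneg _))]
  simp only [Pi.add_apply]
  nlinarith [sq_nonneg (‖f u‖ - ‖g u‖), norm_nonneg (f u), norm_nonneg (g u)]

theorem integrable_dot (A : Matrix (Fin 4) (Fin 4) ℂ)
    (hf : MemLp f 2 (volume : Measure (Fin 3 → ℝ))) (hg : MemLp g 2 volume) :
    Integrable (fun u => star (f u) ⬝ᵥ A.mulVec (g u)) volume := by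
  refine Integrable.mono' (((integrable_norm_mul hf hg).const_mul (∑ i, ∑ j, ‖A i j‖)))
    (aesm_dot A hf.1 hg.1) ?_
  filter_upwards with u
  exact dot_norm_le A (f u) (g u)

theorem integrable_qre (α : Fin 3 → ℝ) (hf : MemLp f 2 (volume : Measure (Fin 3 → ℝ))) :
    Integrable (fun u => qre α (f u)) volume :=
  (integrable_dot (gmat α) hf hf).re

theorem innerL_self_re (α : Fin 3 → ℝ) (hf : MemLp f 2 (volume : Measure (Fin 3 → ℝ))) :
    (innerL α f f).re = ∫ u, qre α (f u) := by
  rw [innerL]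
  exact (integral_re (integrable_dot (gmat α) hf hf)).symm

theorem innerL_self_re_nonneg (α : Fin 3 → ℝ) (hα : enorm3 α < 1)
    (hf : MemLp f 2 (volume : Measure (Fin 3 → ℝ))) : 0 ≤ (innerL α f f).re := by
  rw [innerL_self_re α hf]
  exact integral_nonneg fun u => qre_nonneg α hα (f u)

theorem normL_sq (α : Fin 3 → ℝ) (hα : enorm3 α < 1)
    (hf : MemLp f 2 (volume : Measure (Fin 3 → ℝ))) :
    normL α f ^ 2 = (innerL α f f).re :=
  Real.sq_sqrt (innerL_self_re_nonneg α hα hf)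

/-- The `ℝ≥0∞`-valued quadratic integral. -/
def QQ (α : Fin 3 → ℝ) (f : (Fin 3 → ℝ) → Fin 4 → ℂ) : ℝ≥0∞ :=
  ∫⁻ u, ENNReal.ofReal (qre α (f u))

theorem QQ_eq (α : Fin 3 → ℝ) (hα : enorm3 α < 1)
    (hf : MemLp f 2 (volume : Measure (Fin 3 → ℝ))) :
    QQ α f = ENNReal.ofReal (normL α f ^ 2) := by
  rw [normL_sq α hα hf, innerL_self_re α hf, QQ,
    ← ofReal_integral_eq_lintegral_ofReal (integrable_qre α hf)
      (Filter.Eventually.of_forall fun u => qre_nonneg α hα (f u))]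

theorem normL_le_of_QQ_le (α : Fin 3 → ℝ) (hα : enorm3 α < 1)
    (hf : MemLp f 2 (volume : Measure (Fin 3 → ℝ))) {c : ℝ} (hc : 0 ≤ c)
    (h : QQ α f ≤ ENNReal.ofReal (c ^ 2)) : normL α f ≤ c := by
  rw [QQ_eq α hα hf] at h
  have h2 : normL α f ^ 2 ≤ c ^ 2 :=
    (ENNReal.ofReal_le_ofReal_iff (by positivity)).mp h
  nlinarith [Real.sqrt_nonneg (innerL α f f).re, normL, h2,
    Real.sqrt_nonneg (innerL α f f).re]

theorem normL_nonneg (α : Fin 3 → ℝ) (f : (Fin 3 → ℝ) → Fin 4 → ℂ) : 0 ≤ normL α f :=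
  Real.sqrt_nonneg _

theorem eLpNorm_le_of_QQ (α : Fin 3 → ℝ) (hα : enorm3 α < 1)
    (f : (Fin 3 → ℝ) → Fin 4 → ℂ) :
    eLpNorm f 2 (volume : Measure (Fin 3 → ℝ))
      ≤ (ENNReal.ofReal ((1 - enorm3 α)⁻¹) * QQ α f) ^ (1/2 : ℝ) := by
  rw [eLpNorm_eq_lintegral_rpow_enorm_toReal two_ne_zero ENNReal.ofNat_ne_top]
  have h2 : ((2 : ℝ≥0∞)).toReal = (2 : ℝ) := by simp
  rw [h2]
  refine ENNReal.rpow_le_rpow ?_ (by norm_num)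
  rw [QQ, ← lintegral_const_mul' _ _ ENNReal.ofReal_ne_top]
  refine lintegral_mono fun u => ?_
  have hb : ‖f u‖ ^ (2:ℝ) ≤ (1 - enorm3 α)⁻¹ * qre α (f u) := by
    rw [show (2:ℝ) = ((2:ℕ):ℝ) by norm_num, Real.rpow_natCast]
    exact le_trans (norm_sq_le_cnorm2 (f u)) (cnorm2_le_inv_qre α hα (f u))
  calc (‖f u‖₊ : ℝ≥0∞) ^ (2:ℝ) = ENNReal.ofReal ‖f u‖ ^ (2:ℝ) := by
        exact congrArg (· ^ (2:ℝ)) (ofReal_norm (f u)).symm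
    _ = ENNReal.ofReal (‖f u‖ ^ (2:ℝ)) := by
        rw [← ENNReal.ofReal_rpow_of_nonneg (norm_nonneg _) (by norm_num)]
    _ ≤ ENNReal.ofReal ((1 - enorm3 α)⁻¹ * qre α (f u)) := ENNReal.ofReal_le_ofReal hb
    _ = ENNReal.ofReal ((1 - enorm3 α)⁻¹) * ENNReal.ofReal (qre α (f u)) :=
        ENNReal.ofReal_mul (inv_nonneg.mpr (by linarith))

theorem QQ_fatou (α : Fin 3 → ℝ) {fj : ℕ → (Fin 3 → ℝ) → Fin 4 → ℂ}
    (hmeas : ∀ j, Measurable (fj j)) {f : (Fin 3 → ℝ) → Fin 4 → ℂ}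
    (h : ∀ᵐ u : Fin 3 → ℝ, Tendsto (fun j => fj j u) atTop (nhds (f u))) :
    QQ α f ≤ liminf (fun j => QQ α (fj j)) atTop := by
  have hm : ∀ j, Measurable fun u => ENNReal.ofReal (qre α (fj j u)) := fun j =>
    ENNReal.measurable_ofReal.comp ((cont_qre α).measurable.comp (hmeas j))
  have heq : QQ α f = ∫⁻ u, liminf (fun j => ENNReal.ofReal (qre α (fj j u))) atTop := by
    refine lintegral_congr_ae (h.mono fun u hu => ?_)
    have : Tendsto (fun j => ENNReal.ofReal (qre α (fj j u))) atTop
        (nhds (ENNReal.ofReal (qre α (f u)))) :=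
      (ENNReal.continuous_ofReal.tendsto _).comp (((cont_qre α).tendsto _).comp hu)
    exact this.liminf_eq.symm
  rw [heq]
  simpa [QQ] using lintegral_liminf_le hm


/-- mixed real form -/
def pmix (α : Fin 3 → ℝ) (v w : Fin 4 → ℂ) : ℝ :=
  (star v ⬝ᵥ (gmat α).mulVec w + star w ⬝ᵥ (gmat α).mulVec v).re

theorem qre_expand (α : Fin 3 → ℝ) (v w : Fin 4 → ℂ) (t : ℝ) :
    qre α (v + (t : ℂ) • w) = qre α v + t * pmix α v w + t ^ 2 * qre α w := by
  have h := dot_expand (gmat α) v w (t : ℂ)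
  have h2 : (starRingEnd ℂ (t:ℂ) * (t:ℂ)) = ((t^2 : ℝ) : ℂ) := by
    rw [Complex.conj_ofReal]; push_cast; ring
  rw [qre, h, h2, Complex.conj_ofReal]
  simp only [Complex.add_re, Complex.re_ofReal_mul, pmix, qre, Complex.add_re]
  ring

theorem pmix_integrable (α : Fin 3 → ℝ) {f g : (Fin 3 → ℝ) → Fin 4 → ℂ}
    (hf : MemLp f 2 (volume : Measure (Fin 3 → ℝ))) (hg : MemLp g 2 volume) :
    Integrable (fun u => pmix α (f u) (g u)) volume :=
  ((integrable_dot (gmat α) hf hg).add (integrable_dot (gmat α) hg hf)).re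

theorem normL_add_le (α : Fin 3 → ℝ) (hα : enorm3 α < 1)
    {f g : (Fin 3 → ℝ) → Fin 4 → ℂ}
    (hf : MemLp f 2 (volume : Measure (Fin 3 → ℝ))) (hg : MemLp g 2 volume) :
    normL α (fun u => f u + g u) ≤ normL α f + normL α g := by
  set Qf := (innerL α f f).re with hQf
  set Qg := (innerL α g g).re with hQg
  set P := ∫ u, pmix α (f u) (g u) with hP
  have hQf0 : 0 ≤ Qf := innerL_self_re_nonneg α hα hf
  have hQg0 : 0 ≤ Qg := innerL_self_re_nonneg α hα hg
  have hQf' : Qf = ∫ u, qre α (f u) := hQf.trans (innerL_self_re α hf)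
  have hQg' : Qg = ∫ u, qre α (g u) := hQg.trans (innerL_self_re α hg)
  have hIf := integrable_qre α hf
  have hIg := integrable_qre α hg
  have hIp := pmix_integrable α hf hg
  -- quadratic nonnegativity
  have hquad : ∀ t : ℝ, 0 ≤ Qg * (t * t) + P * t + Qf := by
    intro t
    have hint : ∫ u, qre α (f u + (t:ℂ) • g u)
        = Qf + t * P + t ^ 2 * Qg := by
      have hfun : (fun u => qre α (f u + (t:ℂ) • g u))
          = fun u => qre α (f u) + t * pmix α (f u) (g u) + t ^ 2 * qre α (g u) := by
        funext u; exact qre_expand α (f u) (g u) t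
      rw [hfun, hQf', hQg', hP]
      have e1 : ∫ u, ((qre α (f u) + t * pmix α (f u) (g u)) + t ^ 2 * qre α (g u))
          = (∫ u, (qre α (f u) + t * pmix α (f u) (g u))) + ∫ u, t ^ 2 * qre α (g u) :=
        integral_add (hIf.add (hIp.const_mul t)) (hIg.const_mul _)
      have e2 : ∫ u, (qre α (f u) + t * pmix α (f u) (g u))
          = (∫ u, qre α (f u)) + ∫ u, t * pmix α (f u) (g u) :=
        integral_add hIf (hIp.const_mul _)
      rw [e1, e2, integral_const_mul, integral_const_mul]
    have hnn : 0 ≤ ∫ u, qre α (f u + (t:ℂ) • g u) :=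
      integral_nonneg fun u => qre_nonneg α hα _
    rw [hint] at hnn
    nlinarith [hnn]
  have hdisc := discrim_le_zero hquad
  rw [discrim] at hdisc
  have hPle : P ≤ 2 * Real.sqrt Qf * Real.sqrt Qg := by
    have h4 : P ^ 2 ≤ (2 * Real.sqrt Qf * Real.sqrt Qg) ^ 2 := by
      nlinarith [Real.sq_sqrt hQf0, Real.sq_sqrt hQg0, hdisc]
    calc P ≤ |P| := le_abs_self P
      _ = Real.sqrt (P ^ 2) := (Real.sqrt_sq_eq_abs P).symm
      _ ≤ Real.sqrt ((2 * Real.sqrt Qf * Real.sqrt Qg) ^ 2) := Real.sqrt_le_sqrt h4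
      _ = 2 * Real.sqrt Qf * Real.sqrt Qg := Real.sqrt_sq (by positivity)
  -- expansion at t = 1
  have hsum : MemLp (fun u => f u + g u) 2 (volume : Measure (Fin 3 → ℝ)) := by
    have := hf.add hg
    exact this
  have h1 : (innerL α (fun u => f u + g u) (fun u => f u + g u)).re = Qf + P + Qg := by
    rw [innerL_self_re α hsum]
    have hfun : (fun u => qre α (f u + g u))
        = fun u => qre α (f u) + 1 * pmix α (f u) (g u) + 1 ^ 2 * qre α (g u) := by
      funext u
      have := qre_expand α (f u) (g u) 1
      simpa using this
    rw [hfun, hQf', hQg', hP]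
    have e1 : ∫ u, ((qre α (f u) + 1 * pmix α (f u) (g u)) + 1 ^ 2 * qre α (g u))
        = (∫ u, (qre α (f u) + 1 * pmix α (f u) (g u))) + ∫ u, 1 ^ 2 * qre α (g u) :=
      integral_add (hIf.add (hIp.const_mul _)) (hIg.const_mul _)
    have e2 : ∫ u, (qre α (f u) + 1 * pmix α (f u) (g u))
        = (∫ u, qre α (f u)) + ∫ u, 1 * pmix α (f u) (g u) :=
      integral_add hIf (hIp.const_mul _)
    rw [e1, e2, integral_const_mul, integral_const_mul]
    ring
  rw [normL, h1, normL, normL, ← hQf, ← hQg]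
  have hle : Qf + P + Qg ≤ (Real.sqrt Qf + Real.sqrt Qg) ^ 2 := by
    have e1 := Real.sq_sqrt hQf0
    have e2 := Real.sq_sqrt hQg0
    nlinarith [hPle]
  calc Real.sqrt (Qf + P + Qg) ≤ Real.sqrt ((Real.sqrt Qf + Real.sqrt Qg) ^ 2) :=
        Real.sqrt_le_sqrt hle
    _ = Real.sqrt Qf + Real.sqrt Qg := Real.sqrt_sq (by positivity)



theorem cont_rot3 (φ : Fin 3 → ℝ) : Continuous (rot3 φ) := by
  unfold rot3
  split_ifs with h
  · exact continuous_id
  · have hc : Continuous fun u : Fin 3 → ℝ => (crossProduct ((enorm3 φ)⁻¹ • φ)) u :=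
      (crossProduct ((enorm3 φ)⁻¹ • φ)).continuous_of_finiteDimensional
    have hd : Continuous fun u : Fin 3 → ℝ => dot3 ((enorm3 φ)⁻¹ • φ) u := by
      unfold dot3
      exact continuous_finset_sum _ fun i _ => continuous_const.mul (continuous_apply i)
    fun_prop

theorem cont_hplane (l : Param) : Continuous (hplane l) := by
  have hr := cont_rot3 l.φ
  have hd : Continuous fun u : Fin 3 → ℝ => dot3 l.α (rot3 l.φ u) := by
    unfold dot3
    exact continuous_finset_sum _ fun i _ =>
      continuous_const.mul ((continuous_apply i).comp hr)
  unfold hplane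
  refine continuous_pi fun i => ?_
  refine Fin.cases ?_ (fun j => ?_) i
  · simp; exact continuous_const.add hd
  · simp; exact continuous_const.add ((continuous_apply (j : Fin 3)).comp hr)

theorem meas_hplane (l : Param) : Measurable (hplane l) := (cont_hplane l).measurable

/-- the candidate limit of a sequence of functions -/
def limG (Fs : ℕ → (Fin 4 → ℝ) → Fin 4 → ℂ) (x : Fin 4 → ℝ) (i : Fin 4) : ℂ :=
  ((limsup (fun j => (Fs j x i).re) atTop : ℝ) : ℂ)
    + ((limsup (fun j => (Fs j x i).im) atTop : ℝ) : ℂ) * Complex.I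

theorem limG_measurable {Fs : ℕ → (Fin 4 → ℝ) → Fin 4 → ℂ}
    (hFs : ∀ j, Measurable (Fs j)) : Measurable (limG Fs) := by
  refine measurable_pi_lambda _ fun i => ?_
  have hre : Measurable fun x => limsup (fun j => (Fs j x i).re) atTop :=
    Measurable.limsup fun j => Complex.measurable_re.comp ((measurable_pi_apply i).comp (hFs j))
  have him : Measurable fun x => limsup (fun j => (Fs j x i).im) atTop :=
    Measurable.limsup fun j => Complex.measurable_im.comp ((measurable_pi_apply i).comp (hFs j))
  exact (Complex.measurable_ofReal.comp hre).add
    ((Complex.measurable_ofReal.comp him).mul_const Complex.I)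

theorem limG_spec {Fs : ℕ → (Fin 4 → ℝ) → Fin 4 → ℂ} {x : Fin 4 → ℝ}
    (h : ∃ L, Tendsto (fun j => Fs j x) atTop (nhds L)) :
    Tendsto (fun j => Fs j x) atTop (nhds (limG Fs x)) := by
  obtain ⟨L, hL⟩ := h
  have hGL : limG Fs x = L := by
    funext i
    have hi : Tendsto (fun j => Fs j x i) atTop (nhds (L i)) :=
      ((continuous_apply i).tendsto L).comp hL
    have hre : Tendsto (fun j => (Fs j x i).re) atTop (nhds ((L i).re)) :=
      (Complex.continuous_re.tendsto _).comp hi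
    have him : Tendsto (fun j => (Fs j x i).im) atTop (nhds ((L i).im)) :=
      (Complex.continuous_im.tendsto _).comp hi
    rw [limG, hre.limsup_eq, him.limsup_eq, Complex.re_add_im]
  rw [hGL]; exact hL


end SixAux

/-- completeness of ℋ: a sequence in ℋ that is Cauchy uniformly over all
hyperplanes λ ∈ 𝒫 converges, uniformly over λ ∈ 𝒫, to some element of ℋ; in particular
it converges in the norm of ℋ. -/
theorem completion_is_complete
    (m c hb e : ℝ) (hm : 0 < m) (hc : 0 < c) (hhb : 0 < hb)
    (A : (Fin 4 → ℝ) → Fin 4 → ℝ) (hA : Continuous A)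
    (F : ℕ → ((Fin 4 → ℝ) → Fin 4 → ℂ)) (hF : ∀ k, memHH m c hb e A (F k))
    (hcauchy : ∀ ε > (0 : ℝ), ∃ N : ℕ, ∀ k ≥ N, ∀ n ≥ N, ∀ l : Param,
      normL l.α (fun u => F k (hplane l u) - F n (hplane l u)) < ε) :
    ∃ G : (Fin 4 → ℝ) → Fin 4 → ℂ, memHH m c hb e A G ∧
      (∀ ε > (0 : ℝ), ∃ N : ℕ, ∀ k ≥ N, ∀ l : Param,
        normL l.α (fun u => G (hplane l u) - F k (hplane l u)) < ε) ∧
      Tendsto (fun k => normH (fun x => G x - F k x)) atTop (nhds 0) := by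
  classical
  open SixAux in
  -- basic measurability facts
  have hFm : ∀ k, Measurable (F k) := fun k => (hF k).1
  have hFL : ∀ k (l : Param), MemLp (fun u => F k (hplane l u)) 2 volume :=
    fun k l => (hF k).2.1 l
  have hFslice_meas : ∀ k (l : Param), Measurable fun u => F k (hplane l u) :=
    fun k l => (hFm k).comp (meas_hplane l)
  -- choose the dyadic Cauchy indices
  have hNf : ∀ j : ℕ, ∃ N : ℕ, ∀ k ≥ N, ∀ n ≥ N, ∀ l : Param,
      normL l.α (fun u => F k (hplane l u) - F n (hplane l u)) < (2⁻¹ : ℝ) ^ j :=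
    fun j => hcauchy _ (by positivity)
  choose Nf hNfs using hNf
  -- the subsequence
  let ks : ℕ → ℕ := fun j => Nat.rec (Nf 0) (fun j kj => max (kj + 1) (Nf (j + 1))) j
  have hks_mono : StrictMono ks := strictMono_nat_of_lt_succ fun j =>
    lt_of_lt_of_le (Nat.lt_succ_self _) (le_max_left _ _)
  have hks_ge : ∀ j, Nf j ≤ ks j := by
    intro j
    cases j with
    | zero => exact le_rfl
    | succ j => exact le_max_right _ _
  have key : ∀ (j a b : ℕ), j ≤ a → j ≤ b → ∀ l : Param,
      normL l.α (fun u => F (ks a) (hplane l u) - F (ks b) (hplane l u)) < (2⁻¹ : ℝ) ^ j :=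
    fun j a b ha hb l => hNfs j _ (le_trans (hks_ge j) (hks_mono.monotone ha))
      _ (le_trans (hks_ge j) (hks_mono.monotone hb)) l
  -- almost-everywhere convergence on every hyperplane
  have hae : ∀ l : Param, ∀ᵐ u : Fin 3 → ℝ,
      ∃ L, Tendsto (fun j => F (ks j) (hplane l u)) atTop (nhds L) := by
    intro l
    have hs1 : enorm3 l.α < 1 := l.hα
    set s := enorm3 l.α with hsdef
    set rl : ℝ := Real.sqrt ((1 - s)⁻¹) + 1 with hrl
    have hrl0 : 0 < rl := by positivity
    have hrlge : Real.sqrt ((1 - s)⁻¹) < rl := by rw [hrl]; linarith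
    refine MeasureTheory.Lp.ae_tendsto_of_cauchy_eLpNorm (μ := volume) (p := 2)
      (f := fun j u => F (ks j) (hplane l u)) (fun j => (hFL (ks j) l).1) one_le_two
      (B := fun N => ENNReal.ofReal (2 * rl * (2⁻¹ : ℝ) ^ N)) ?_ ?_
    · -- the sum of the bounds is finite
      rw [← ENNReal.ofReal_tsum_of_nonneg (fun n => by positivity)
        (((summable_geometric_of_lt_one (by norm_num) (by norm_num)).mul_left (2 * rl)))]
      exact ENNReal.ofReal_ne_top
    · intro N n mm hn hm
      have hD2 : MemLp (fun u => F (ks n) (hplane l u) - F (ks mm) (hplane l u)) 2 volume :=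
        (hFL (ks n) l).sub (hFL (ks mm) l)
      have hnormD := key N n mm hn hm l
      have hq0 : (0:ℝ) < (2⁻¹ : ℝ) ^ N := by positivity
      have hQb : QQ l.α (fun u => F (ks n) (hplane l u) - F (ks mm) (hplane l u))
          ≤ ENNReal.ofReal (((2⁻¹ : ℝ) ^ N) ^ 2) := by
        rw [QQ_eq l.α hs1 hD2]
        exact ENNReal.ofReal_le_ofReal
          (pow_le_pow_left₀ (normL_nonneg _ _) hnormD.le 2)
      have hdiff : (fun j u => F (ks j) (hplane l u)) n - (fun j u => F (ks j) (hplane l u)) mm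
          = fun u => F (ks n) (hplane l u) - F (ks mm) (hplane l u) := rfl
      rw [hdiff]
      calc eLpNorm (fun u => F (ks n) (hplane l u) - F (ks mm) (hplane l u)) 2 volume
          ≤ (ENNReal.ofReal ((1 - s)⁻¹)
              * QQ l.α (fun u => F (ks n) (hplane l u) - F (ks mm) (hplane l u))) ^ (1/2 : ℝ) :=
            eLpNorm_le_of_QQ l.α hs1 _
        _ ≤ (ENNReal.ofReal ((1 - s)⁻¹) * ENNReal.ofReal (((2⁻¹ : ℝ) ^ N) ^ 2)) ^ (1/2 : ℝ) := by
            gcongr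
        _ = ENNReal.ofReal (((1 - s)⁻¹ * ((2⁻¹ : ℝ) ^ N) ^ 2) ^ (1/2 : ℝ)) := by
            have h1s : (0:ℝ) < 1 - s := by linarith
            rw [← ENNReal.ofReal_mul (inv_nonneg.mpr h1s.le),
              ← ENNReal.ofReal_rpow_of_nonneg
                (mul_nonneg (inv_nonneg.mpr h1s.le) (by positivity)) (by norm_num)]
        _ < ENNReal.ofReal (2 * rl * (2⁻¹ : ℝ) ^ N) := by
            rw [ENNReal.ofReal_lt_ofReal_iff (by positivity)]
            have he : ((1 - s)⁻¹ * ((2⁻¹ : ℝ) ^ N) ^ 2) ^ (1/2 : ℝ)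
                = Real.sqrt ((1 - s)⁻¹) * (2⁻¹ : ℝ) ^ N := by
              have h1s : (0:ℝ) < 1 - s := by linarith
              rw [← Real.sqrt_eq_rpow, Real.sqrt_mul (inv_nonneg.mpr h1s.le), Real.sqrt_sq hq0.le]
            rw [he]
            have : Real.sqrt ((1 - s)⁻¹) * (2⁻¹ : ℝ) ^ N < rl * (2⁻¹ : ℝ) ^ N :=
              mul_lt_mul_of_pos_right hrlge hq0
            nlinarith [this, mul_pos hrl0 hq0]
  -- the limit function
  set G : (Fin 4 → ℝ) → Fin 4 → ℂ := limG (fun j => F (ks j)) with hGdef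
  have hGmeas : Measurable G := limG_measurable fun j => hFm (ks j)
  have haeG : ∀ l : Param, ∀ᵐ u : Fin 3 → ℝ,
      Tendsto (fun j => F (ks j) (hplane l u)) atTop (nhds (G (hplane l u))) :=
    fun l => (hae l).mono fun u hu => limG_spec hu
  -- the central convergence estimate
  have hkey : ∀ ε : ℝ, 0 < ε → ∃ N : ℕ, ∀ k' ≥ N, ∀ l : Param,
      MemLp (fun u => G (hplane l u) - F k' (hplane l u)) 2 volume ∧
      normL l.α (fun u => G (hplane l u) - F k' (hplane l u)) < ε := by
    intro ε hε
    obtain ⟨N₀, hN₀⟩ := hcauchy (ε/2) (by positivity)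
    refine ⟨N₀, fun k' hk' l => ?_⟩
    have hs1 : enorm3 l.α < 1 := l.hα
    have hDmeas : Measurable fun u => G (hplane l u) - F k' (hplane l u) :=
      (hGmeas.comp (meas_hplane l)).sub ((hFm k').comp (meas_hplane l))
    have haeD : ∀ᵐ u : Fin 3 → ℝ,
        Tendsto (fun j => F (ks j) (hplane l u) - F k' (hplane l u)) atTop
          (nhds (G (hplane l u) - F k' (hplane l u))) :=
      (haeG l).mono fun u hu => hu.sub tendsto_const_nhds
    have hQ : QQ l.α (fun u => G (hplane l u) - F k' (hplane l u))
        ≤ ENNReal.ofReal ((ε/2)^2) := by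
      refine le_trans (QQ_fatou l.α
        (fun j => (hFslice_meas (ks j) l).sub (hFslice_meas k' l)) haeD) ?_
      refine liminf_le_of_frequently_le' (((eventually_ge_atTop N₀).mono
        fun j hj => ?_).frequently)
      have hD2 : MemLp (fun u => F (ks j) (hplane l u) - F k' (hplane l u)) 2 volume :=
        (hFL (ks j) l).sub (hFL k' l)
      show QQ l.α (fun u => F (ks j) (hplane l u) - F k' (hplane l u)) ≤ _
      rw [QQ_eq l.α hs1 hD2]
      refine ENNReal.ofReal_le_ofReal ?_
      have hn := hN₀ (ks j) (le_trans hj (hks_mono.le_apply)) k' hk' l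
      exact pow_le_pow_left₀ (normL_nonneg _ _) hn.le 2
    have hfin : eLpNorm (fun u => G (hplane l u) - F k' (hplane l u)) 2 volume < ⊤ := by
      refine lt_of_le_of_lt (eLpNorm_le_of_QQ l.α hs1 _) ?_
      refine ENNReal.rpow_lt_top_of_nonneg (by norm_num) ?_
      exact ENNReal.mul_ne_top ENNReal.ofReal_ne_top
        (ne_top_of_le_ne_top ENNReal.ofReal_ne_top hQ)
    have hmem : MemLp (fun u => G (hplane l u) - F k' (hplane l u)) 2 volume :=
      ⟨hDmeas.aestronglyMeasurable, hfin⟩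
    refine ⟨hmem, lt_of_le_of_lt (normL_le_of_QQ_le l.α hs1 hmem (by positivity) hQ)
      (half_lt_self hε)⟩
  -- the approximating sequence from ℌ
  have hpick : ∀ k' : ℕ, ∃ Φ : (Fin 4 → ℝ) → Fin 4 → ℂ, memH m c hb e A Φ ∧
      ∀ l : Param, normL l.α (fun u => F k' (hplane l u) - Φ (hplane l u))
        < 1 / ((k' : ℝ) + 1) := by
    intro k'
    obtain ⟨Ψs, hΨmem, happ⟩ := (hF k').2.2
    obtain ⟨N', hN'⟩ := happ (1 / ((k' : ℝ) + 1)) (by positivity)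
    exact ⟨Ψs N', hΨmem N', fun l => hN' N' le_rfl l⟩
  choose Φ hΦmem hΦapp using hpick
  refine ⟨G, ⟨hGmeas, ?_, Φ, hΦmem, ?_⟩, ?_, ?_⟩
  · -- MemLp on every hyperplane
    intro l
    obtain ⟨N₁, hN₁⟩ := hkey 1 one_pos
    have h := (hN₁ N₁ le_rfl l).1
    have hfe : (fun u => G (hplane l u))
        = fun u => (G (hplane l u) - F N₁ (hplane l u)) + F N₁ (hplane l u) := by
      funext u; simp
    rw [hfe]
    exact h.add (hFL N₁ l)
  · -- the approximating sequence converges uniformly in λ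
    intro ε hε
    obtain ⟨N₁, hN₁⟩ := hkey (ε/2) (by positivity)
    obtain ⟨N₂, hN₂⟩ := exists_nat_gt (2/ε)
    refine ⟨max N₁ N₂, fun k' hk' l => ?_⟩
    have h1 := hN₁ k' (le_trans (le_max_left _ _) hk')  l
    have h2 := hΦapp k' l
    have hk2 : (N₂ : ℝ) ≤ (k' : ℝ) := Nat.cast_le.mpr (le_trans (le_max_right _ _) hk')
    have hfrac : 1 / ((k' : ℝ) + 1) < ε/2 := by
      rw [div_lt_div_iff₀ (by positivity) (by norm_num)]
      have h3 : 2/ε < (k' : ℝ) + 1 := by linarith [hN₂]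
      rw [div_lt_iff₀ hε] at h3
      nlinarith
    have hΦL2 : MemLp (fun u => F k' (hplane l u) - Φ k' (hplane l u)) 2 volume :=
      (hFL k' l).sub ((hΦmem k').2.2.1 l)
    have hmink : normL l.α (fun u => (G (hplane l u) - F k' (hplane l u))
          + (F k' (hplane l u) - Φ k' (hplane l u)))
        ≤ normL l.α (fun u => G (hplane l u) - F k' (hplane l u))
          + normL l.α (fun u => F k' (hplane l u) - Φ k' (hplane l u)) :=
      normL_add_le l.α l.hα h1.1 hΦL2
    have hfe : (fun u => (G (hplane l u) - F k' (hplane l u))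
          + (F k' (hplane l u) - Φ k' (hplane l u)))
        = fun u => G (hplane l u) - Φ k' (hplane l u) := by
      funext u; ring
    rw [hfe] at hmink
    calc normL l.α (fun u => G (hplane l u) - Φ k' (hplane l u))
        ≤ normL l.α (fun u => G (hplane l u) - F k' (hplane l u))
          + normL l.α (fun u => F k' (hplane l u) - Φ k' (hplane l u)) := hmink
      _ < ε/2 + ε/2 := add_lt_add h1.2 (lt_trans h2 hfrac)
      _ = ε := add_halves ε
  · -- uniform convergence of F to G
    intro ε hε
    obtain ⟨N, hN⟩ := hkey ε hε
    exact ⟨N, fun k' hk' l => (hN k' hk' l).2⟩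
  · -- convergence in the norm of ℋ
    rw [Metric.tendsto_atTop]
    intro ε hε
    obtain ⟨N, hN⟩ := hkey ε hε
    refine ⟨N, fun k' hk' => ?_⟩
    have hval : normH (fun x => G x - F k' x)
        = normL param0.α (fun u => G (hplane param0 u) - F k' (hplane param0 u)) := rfl
    rw [Real.dist_eq, sub_zero, hval, abs_of_nonneg (normL_nonneg _ _)]
    exact (hN k' hk' param0).2

end
end

section
/- (Separability of ℋ) There exists a countable subset D of ℋ that is dense in ℋ: for every F ∈ ℋ and every ε > 0 there exists G ∈ D with ‖F − G‖_ℋ < ε. -/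
open MeasureTheory Filter Matrix

noncomputable section

/-- Auxiliary instances for the `L²` space used below. -/
instance : Fact ((1 : ENNReal) ≤ 2) := ⟨by norm_num⟩
instance : Fact ((2 : ENNReal) ≠ ⊤) := ⟨by norm_num⟩

lemma gmat_zero : gmat (0 : Fin 3 → ℝ) = 1 := by
  simp [gmat]

lemma param0_alpha : param0.α = 0 := rfl

/-- Transfer of `MemLp` to the Euclidean-norm codomain. -/
lemma memℒp_euc {f : (Fin 3 → ℝ) → Fin 4 → ℂ}
    (hf : MemLp f 2 (volume : Measure (Fin 3 → ℝ))) :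
    MemLp (fun u => (WithLp.equiv 2 (Fin 4 → ℂ)).symm (f u)) 2 volume :=
  (PiLp.continuousLinearEquiv 2 ℂ (fun _ : Fin 4 => ℂ)).symm.toContinuousLinearMap.comp_memLp' hf

/-- The trace of `F` on the hyperplane `x⁰ = 0`, as an element of `L²(ℝ³, ℂ⁴)`. -/
def trL2 (F : (Fin 4 → ℝ) → Fin 4 → ℂ)
    (hF : MemLp (fun u => F (hplane param0 u)) 2 (volume : Measure (Fin 3 → ℝ))) :
    Lp (EuclideanSpace ℂ (Fin 4)) 2 (volume : Measure (Fin 3 → ℝ)) :=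
  (memℒp_euc hF).toLp _

lemma innerL_eq_inner {f : (Fin 3 → ℝ) → Fin 4 → ℂ}
    (hf : MemLp f 2 (volume : Measure (Fin 3 → ℝ))) :
    innerL param0.α f f
      = (inner ℂ ((memℒp_euc hf).toLp _) ((memℒp_euc hf).toLp _) : ℂ) := by
  rw [MeasureTheory.L2.inner_def]
  refine (integral_congr_ae ?_).symm
  filter_upwards [MemLp.coeFn_toLp (memℒp_euc hf)] with u hu
  rw [hu]
  show (inner ℂ ((WithLp.equiv 2 (Fin 4 → ℂ)).symm (f u))
      ((WithLp.equiv 2 (Fin 4 → ℂ)).symm (f u)) : ℂ) = _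
  rw [PiLp.inner_apply]
  simp [RCLike.inner_apply, dotProduct, param0_alpha, gmat_zero,
    Matrix.one_mulVec, mul_comm, Complex.mul_conj']

lemma normL_eq {f : (Fin 3 → ℝ) → Fin 4 → ℂ}
    (hf : MemLp f 2 (volume : Measure (Fin 3 → ℝ))) :
    normL param0.α f = ‖(memℒp_euc hf).toLp _‖ := by
  have hre : (innerL param0.α f f).re = ‖(memℒp_euc hf).toLp _‖ ^ 2 := by
    rw [innerL_eq_inner hf, inner_self_eq_norm_sq_to_K]
    norm_cast
  rw [normL, hre, Real.sqrt_sq (norm_nonneg _)]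

lemma normH_sub_eq {F G : (Fin 4 → ℝ) → Fin 4 → ℂ}
    (hF : MemLp (fun u => F (hplane param0 u)) 2 (volume : Measure (Fin 3 → ℝ)))
    (hG : MemLp (fun u => G (hplane param0 u)) 2 (volume : Measure (Fin 3 → ℝ))) :
    normH (fun x => F x - G x) = dist (trL2 F hF) (trL2 G hG) := by
  have hh : MemLp (fun u => F (hplane param0 u) - G (hplane param0 u)) 2
      (volume : Measure (Fin 3 → ℝ)) := hF.sub hG
  have h1 : normH (fun x => F x - G x) = normL param0.α
      (fun u => F (hplane param0 u) - G (hplane param0 u)) := rfl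
  rw [h1, normL_eq hh, dist_eq_norm]
  congr 1

/-- separability of ℋ: there is a countable subset of ℋ that is dense in ℋ. -/
theorem completion_separable
    (m c hb e : ℝ) (hm : 0 < m) (hc : 0 < c) (hhb : 0 < hb)
    (A : (Fin 4 → ℝ) → Fin 4 → ℝ) (hA : Continuous A) :
    ∃ D : Set ((Fin 4 → ℝ) → Fin 4 → ℂ), D.Countable ∧
      (∀ G ∈ D, memHH m c hb e A G) ∧
      ∀ F : (Fin 4 → ℝ) → Fin 4 → ℂ, memHH m c hb e A F →
        ∀ ε > (0 : ℝ), ∃ G ∈ D, normH (fun x => F x - G x) < ε := by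
  classical
  set S : Set (Lp (EuclideanSpace ℂ (Fin 4)) 2 (volume : Measure (Fin 3 → ℝ))) :=
    {x | ∃ F, ∃ hF : memHH m c hb e A F, x = trL2 F (hF.2.1 param0)} with hS
  obtain ⟨t, htc, htd⟩ := TopologicalSpace.exists_countable_dense (↥S)
  set pick : ↥S → ((Fin 4 → ℝ) → Fin 4 → ℂ) := fun x => x.2.choose with hpick
  refine ⟨pick '' t, htc.image pick, ?_, ?_⟩
  · rintro G ⟨x, _, rfl⟩
    exact x.2.choose_spec.choose
  · intro F hF ε hε
    have hxS : trL2 F (hF.2.1 param0) ∈ S := ⟨F, hF, rfl⟩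
    obtain ⟨b, hbt, hbd⟩ := Metric.mem_closure_iff.mp (htd ⟨_, hxS⟩) ε hε
    refine ⟨pick b, ⟨b, hbt, rfl⟩, ?_⟩
    obtain ⟨hG, hGeq⟩ := b.2.choose_spec
    rw [normH_sub_eq (hF.2.1 param0) (hG.2.1 param0), ← hGeq]
    exact hbd

end
end

section
/- (Theorem 7 / cov1) Let Λ be a proper orthochronous Lorentz transformation and a ∈ ℝ⁴. If Ψ ∈ ℌ (defined with potential A), then the function Ψ̃ defined by Ψ̃(x̃) = S(Λ) Ψ(Λ⁻¹(x̃ − a)) belongs to ℌ̃, the space defined in the same way as ℌ but with the transformed potential Ã_μ(x̃) = (Λ⁻¹)^ν_μ A_ν(Λ⁻¹(x̃ − a)). -/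
open MeasureTheory Filter Matrix

noncomputable section

/-- The Minkowski metric matrix diag(1,−1,−1,−1). -/
def minkM : Matrix (Fin 4) (Fin 4) ℝ := Matrix.diagonal ![1, -1, -1, -1]

/-- Λ is a proper orthochronous Lorentz transformation (Λ ∈ L₊↑). -/
def IsLorentz (L : Matrix (Fin 4) (Fin 4) ℝ) : Prop :=
  Lᵀ * minkM * L = minkM ∧ L.det = 1 ∧ 1 ≤ L 0 0

/-- S = S(Λ) is a spin representative of Λ: S is invertible,
S⁻¹ γ^μ S = Λ^μ_ν γ^ν for all μ, and S⁻¹ = γ⁰ S† γ⁰. -/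
def IsSpinRep (L : Matrix (Fin 4) (Fin 4) ℝ) (S : Matrix (Fin 4) (Fin 4) ℂ) : Prop :=
  IsUnit S.det ∧ (∀ μ : Fin 4, S⁻¹ * gmm μ * S = ∑ ν : Fin 4, (L μ ν : ℂ) • gmm ν) ∧
    S⁻¹ = gmm 0 * Sᴴ * gmm 0

/-- The Poincaré transformation of wave functions, (W_{(Λ,a)}F)(x̃) = S F(Λ⁻¹(x̃ − a)). -/
def poinc (L : Matrix (Fin 4) (Fin 4) ℝ) (S : Matrix (Fin 4) (Fin 4) ℂ) (a : Fin 4 → ℝ)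
    (F : (Fin 4 → ℝ) → Fin 4 → ℂ) : (Fin 4 → ℝ) → Fin 4 → ℂ :=
  fun x => S.mulVec (F (L⁻¹.mulVec (x - a)))

/-- The transformed potential, determined by the covariant rule
Ã_μ(x̃) = (Λ⁻¹)^ν_μ A_ν(Λ⁻¹(x̃ − a)); expressed here in upper-index components
(lowering indices with `minkSign`). -/
def lorPot (L : Matrix (Fin 4) (Fin 4) ℝ) (a : Fin 4 → ℝ) (A : (Fin 4 → ℝ) → Fin 4 → ℝ) :
    (Fin 4 → ℝ) → Fin 4 → ℝ :=
  fun x μ => minkSign μ * ∑ ν : Fin 4, L⁻¹ ν μ * (minkSign ν * A (L⁻¹.mulVec (x - a)) ν)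
section Aux1

lemma enorm3_zero : enorm3 (0 : Fin 3 → ℝ) = 0 := by simp [enorm3]

lemma enorm3_sq (v : Fin 3 → ℝ) : enorm3 v ^ 2 = ∑ i, v i ^ 2 :=
  Real.sq_sqrt (by positivity)

lemma rot3_zero_phi (u : Fin 3 → ℝ) : rot3 0 u = u := by
  simp [rot3, enorm3_zero]

lemma rot3_sumsq (φ u : Fin 3 → ℝ) : ∑ i, rot3 φ u i ^ 2 = ∑ i, u i ^ 2 := by
  unfold rot3
  split_ifs with h
  · rfl
  · have ht : enorm3 φ ^ 2 = ∑ i, φ i ^ 2 := enorm3_sq φ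
    set t := enorm3 φ with htdef
    have hcs : Real.cos t ^ 2 + Real.sin t ^ 2 = 1 := Real.cos_sq_add_sin_sq t
    rw [Fin.sum_univ_three] at ht ⊢
    have hk : (t⁻¹ * φ 0) ^ 2 + (t⁻¹ * φ 1) ^ 2 + (t⁻¹ * φ 2) ^ 2 = 1 := by
      field_simp
      linarith [ht]
    simp only [cross_apply, Pi.add_apply, Pi.smul_apply, smul_eq_mul, dot3,
      Fin.sum_univ_three, Matrix.cons_val_zero, Matrix.cons_val_one, Matrix.head_cons,
      Matrix.cons_val_two, Matrix.tail_cons]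
    set c := Real.cos t
    set s := Real.sin t
    set k0 := t⁻¹ * φ 0
    set k1 := t⁻¹ * φ 1
    set k2 := t⁻¹ * φ 2
    set u0 := u 0
    set u1 := u 1
    set u2 := u 2
    linear_combination
      ((u0^2+u1^2+u2^2) - (k0*u0+k1*u1+k2*u2)^2) * hcs
        + (s^2*(u0^2+u1^2+u2^2) + (1-c)^2*(k0*u0+k1*u1+k2*u2)^2) * hk

end Aux1
section Aux2

lemma dot3_add_right (a u w : Fin 3 → ℝ) : dot3 a (u + w) = dot3 a u + dot3 a w := by
  simp [dot3, mul_add, Finset.sum_add_distrib]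

lemma dot3_smul_right (a : Fin 3 → ℝ) (r : ℝ) (u : Fin 3 → ℝ) :
    dot3 a (r • u) = r * dot3 a u := by
  simp only [dot3, Pi.smul_apply, smul_eq_mul, Finset.mul_sum]
  exact Finset.sum_congr rfl fun i _ => by ring

lemma dot3_zero_right (a : Fin 3 → ℝ) : dot3 a 0 = 0 := by simp [dot3]

lemma rot3_add (φ u w : Fin 3 → ℝ) : rot3 φ (u + w) = rot3 φ u + rot3 φ w := by
  unfold rot3
  split_ifs with h
  · rfl
  · rw [map_add, dot3_add_right]
    module

lemma rot3_smul (φ : Fin 3 → ℝ) (r : ℝ) (u : Fin 3 → ℝ) :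
    rot3 φ (r • u) = r • rot3 φ u := by
  unfold rot3
  split_ifs with h
  · rfl
  · rw [_root_.map_smul, dot3_smul_right]
    module

lemma rot3_isLinear (φ : Fin 3 → ℝ) : IsLinearMap ℝ (rot3 φ) :=
  ⟨rot3_add φ, rot3_smul φ⟩

lemma rot3_eq_zero {φ u : Fin 3 → ℝ} (h : rot3 φ u = 0) : u = 0 := by
  have h2 : ∑ i, u i ^ 2 = 0 := by
    rw [← rot3_sumsq φ u, h]; simp
  funext i
  have := (Finset.sum_eq_zero_iff_of_nonneg (fun j _ => sq_nonneg (u j))).1 h2 i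
    (Finset.mem_univ i)
  simpa [pow_eq_zero_iff] using this

lemma rot3_injective (φ : Fin 3 → ℝ) : Function.Injective (rot3 φ) := by
  intro u w huw
  have hsub : rot3 φ (u - w) = 0 := by
    have h1 : u - w = u + (-1 : ℝ) • w := by funext i; simp; ring
    rw [h1, rot3_add, rot3_smul, huw]
    funext i; simp
  have h0 := rot3_eq_zero hsub
  exact sub_eq_zero.mp h0

end Aux2
section Aux3

lemma minkSign_succ (i : Fin 3) : minkSign i.succ = -1 := by
  fin_cases i <;> rfl

lemma minkSign_mul_self (μ : Fin 4) : minkSign μ * minkSign μ = 1 := by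
  fin_cases μ <;> norm_num [minkSign]

lemma IsLorentz.isUnit_det {L : Matrix (Fin 4) (Fin 4) ℝ} (hL : IsLorentz L) :
    IsUnit L.det := by rw [hL.2.1]; exact isUnit_one

lemma IsLorentz.mul_minkM_mul_transpose {L : Matrix (Fin 4) (Fin 4) ℝ} (hL : IsLorentz L) :
    L * minkM * Lᵀ = minkM := by
  have hU : IsUnit L.det := hL.isUnit_det
  have hUT : IsUnit Lᵀ.det := by rwa [Matrix.det_transpose]
  have hMM : minkM * minkM = 1 := by
    rw [minkM, Matrix.diagonal_mul_diagonal]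
    ext i j
    fin_cases i <;> fin_cases j <;> simp [Matrix.diagonal, Matrix.one_apply]
  have hMinv : minkM⁻¹ = minkM := Matrix.inv_eq_right_inv hMM
  have hinv : L⁻¹ * minkM * Lᵀ⁻¹ = minkM := by
    have := congrArg (·⁻¹) hL.1
    simpa [Matrix.mul_inv_rev, hMinv, Matrix.transpose_nonsing_inv, Matrix.mul_assoc] using this
  have hstep : L * (L⁻¹ * minkM * Lᵀ⁻¹ * Lᵀ) = minkM := by
    rw [Matrix.nonsing_inv_mul_cancel_right _ _ hUT, Matrix.mul_nonsing_inv_cancel_left _ _ hU]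
  rw [hinv] at hstep
  rw [Matrix.mul_assoc]
  exact hstep

lemma mink_quadform (v : Fin 4 → ℝ) :
    v ⬝ᵥ minkM.mulVec v = ∑ μ, minkSign μ * v μ ^ 2 := by
  unfold dotProduct
  refine Finset.sum_congr rfl fun μ _ => ?_
  have : minkM.mulVec v μ = minkSign μ * v μ := by
    rw [minkM, Matrix.mulVec_diagonal]; rfl
  rw [this]; ring

lemma lorentz_covector {L : Matrix (Fin 4) (Fin 4) ℝ} (hL : IsLorentz L) (n : Fin 4 → ℝ) :
    ∑ μ, minkSign μ * (L.vecMul n μ) ^ 2 = ∑ μ, minkSign μ * n μ ^ 2 := by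
  rw [← mink_quadform, ← mink_quadform]
  have key := hL.mul_minkM_mul_transpose
  calc L.vecMul n ⬝ᵥ minkM.mulVec (L.vecMul n)
      = (n ᵥ* (L * minkM)) ⬝ᵥ (Lᵀ *ᵥ n) := by
        rw [Matrix.dotProduct_mulVec, Matrix.vecMul_vecMul, Matrix.mulVec_transpose]
    _ = (n ᵥ* (L * minkM * Lᵀ)) ⬝ᵥ n := by
        rw [Matrix.dotProduct_mulVec, Matrix.vecMul_vecMul]
    _ = n ⬝ᵥ minkM.mulVec n := by rw [key, Matrix.dotProduct_mulVec]

end Aux3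
section Aux4

lemma minkSign_zero' : minkSign 0 = 1 := rfl

lemma hplane_zero_apply (l : Param) (u : Fin 3 → ℝ) :
    hplane l u 0 = l.y 0 + dot3 l.α (rot3 l.φ u) := rfl

lemma hplane_succ_apply (l : Param) (u : Fin 3 → ℝ) (i : Fin 3) :
    hplane l u i.succ = l.y i.succ + rot3 l.φ u i := by
  simp [hplane]

lemma sum_sq_lt_one_of_enorm3_lt_one {v : Fin 3 → ℝ} (h : enorm3 v < 1) :
    ∑ i, v i ^ 2 < 1 := by
  have h0 : 0 ≤ enorm3 v := Real.sqrt_nonneg _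
  nlinarith [enorm3_sq v]

lemma enorm3_lt_one_of_sum_sq {v : Fin 3 → ℝ} (h : ∑ i, v i ^ 2 < 1) : enorm3 v < 1 := by
  rw [enorm3]
  rw [show (1:ℝ) = 1 ^ 2 by norm_num] at h
  simpa using (Real.sqrt_lt' one_pos).2 h

lemma plane_transport {L : Matrix (Fin 4) (Fin 4) ℝ} (hL : IsLorentz L)
    (a : Fin 4 → ℝ) (l' : Param) :
    ∃ (l : Param) (f : (Fin 3 → ℝ) →ₗ[ℝ] (Fin 3 → ℝ)), Function.Injective f ∧
      ∀ u, L⁻¹.mulVec (hplane l' u - a) = hplane l (f u) := by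
  have hU := hL.isUnit_det
  set n : Fin 4 → ℝ := Fin.cons 1 (fun i => -l'.α i) with hn
  set nt : Fin 4 → ℝ := L.vecMul n with hntdef
  have hsum : ∑ μ, minkSign μ * n μ ^ 2 = 1 - ∑ i, l'.α i ^ 2 := by
    rw [Fin.sum_univ_succ]
    have h0 : minkSign 0 * n 0 ^ 2 = 1 := by simp [hn, minkSign]
    have h1 : ∀ i : Fin 3, minkSign i.succ * n i.succ ^ 2 = -(l'.α i ^ 2) := by
      intro i; rw [minkSign_succ]; simp [hn]; try ring
    rw [h0, Finset.sum_congr rfl fun i _ => h1 i, Finset.sum_neg_distrib]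
    ring
  have hα' : ∑ i, l'.α i ^ 2 < 1 := sum_sq_lt_one_of_enorm3_lt_one l'.hα
  have hnt : ∑ μ, minkSign μ * nt μ ^ 2 = 1 - ∑ i, l'.α i ^ 2 := by
    rw [hntdef, lorentz_covector hL, hsum]
  have hntexp : nt 0 ^ 2 - ∑ i : Fin 3, nt i.succ ^ 2 = 1 - ∑ i, l'.α i ^ 2 := by
    rw [← hnt]
    conv_rhs => rw [Fin.sum_univ_succ]
    have h0 : minkSign 0 * nt 0 ^ 2 = nt 0 ^ 2 := by rw [minkSign_zero']; ring
    have h1 : ∀ i : Fin 3, minkSign i.succ * nt i.succ ^ 2 = -(nt i.succ ^ 2) := by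
      intro i; rw [minkSign_succ]; ring
    rw [h0, Finset.sum_congr rfl fun i _ => h1 i, Finset.sum_neg_distrib]
    ring
  have hntsuccnn : 0 ≤ ∑ i : Fin 3, nt i.succ ^ 2 := Finset.sum_nonneg fun i _ => sq_nonneg _
  have hnt0sq : nt 0 ^ 2 = (1 - ∑ i, l'.α i ^ 2) + ∑ i : Fin 3, nt i.succ ^ 2 := by linarith
  have hnt0 : nt 0 ≠ 0 := by
    intro h
    rw [h] at hnt0sq
    nlinarith
  have hnt0sqpos : 0 < nt 0 ^ 2 := by positivity
  set αnew : Fin 3 → ℝ := fun i => -(nt i.succ) / nt 0 with hαnewdef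
  have hαnew : enorm3 αnew < 1 := by
    apply enorm3_lt_one_of_sum_sq
    have hs : ∑ i : Fin 3, αnew i ^ 2 = (∑ i : Fin 3, nt i.succ ^ 2) / nt 0 ^ 2 := by
      rw [Finset.sum_div]
      refine Finset.sum_congr rfl fun i _ => ?_
      rw [hαnewdef, div_pow, neg_sq]
    rw [hs, div_lt_one hnt0sqpos]
    nlinarith
  set y' : Fin 4 → ℝ := L⁻¹.mulVec (l'.y - a) with hy'def
  have hπ : enorm3 (0 : Fin 3 → ℝ) < Real.pi := by rw [enorm3_zero]; exact Real.pi_pos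
  set w : (Fin 3 → ℝ) → (Fin 3 → ℝ) :=
    fun u i => (L⁻¹.mulVec (hplane l' u - a)) i.succ - y' i.succ with hwdef
  set P : (Fin 3 → ℝ) → (Fin 4 → ℝ) := fun z => Fin.cons (dot3 l'.α z) z with hPdef
  have hdiff : ∀ u, hplane l' u - a - (l'.y - a) = P (rot3 l'.φ u) := by
    intro u
    funext μ
    refine Fin.cases ?_ (fun j => ?_) μ
    · simp only [Pi.sub_apply, hPdef, Fin.cons_zero, hplane_zero_apply]
      ring
    · simp only [Pi.sub_apply, hPdef, Fin.cons_succ, hplane_succ_apply]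
      ring
  have hw : ∀ u i, w u i = (L⁻¹.mulVec (P (rot3 l'.φ u))) i.succ := by
    intro u i
    rw [hwdef]
    show (L⁻¹.mulVec (hplane l' u - a)) i.succ - (L⁻¹.mulVec (l'.y - a)) i.succ = _
    rw [← Pi.sub_apply (L⁻¹.mulVec (hplane l' u - a)) (L⁻¹.mulVec (l'.y - a)),
      ← Matrix.mulVec_sub, hdiff]
  have hPadd : ∀ z z', P (z + z') = P z + P z' := by
    intro z z'
    funext μ
    refine Fin.cases ?_ (fun j => ?_) μ <;>
      simp [hPdef, dot3_add_right]
  have hPsmul : ∀ (r : ℝ) z, P (r • z) = r • P z := by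
    intro r z
    funext μ
    refine Fin.cases ?_ (fun j => ?_) μ <;>
      simp [hPdef, dot3_smul_right]
  have hwlin : IsLinearMap ℝ w := by
    constructor
    · intro u u'
      funext i
      rw [Pi.add_apply, hw, hw, hw, rot3_add, hPadd, Matrix.mulVec_add, Pi.add_apply]
    · intro r u
      funext i
      rw [Pi.smul_apply, hw, hw, rot3_smul, hPsmul, Matrix.mulVec_smul, Pi.smul_apply]
  set l : Param := ⟨y', αnew, 0, hαnew, hπ⟩ with hldef
  have hkey : ∀ u, L⁻¹.mulVec (hplane l' u - a) = hplane l (w u) := by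
    intro u
    set z : Fin 4 → ℝ := L⁻¹.mulVec (hplane l' u - a) with hz
    have hzy : ∀ i : Fin 3, w u i = z i.succ - y' i.succ := fun i => rfl
    have hdot : ∑ μ, nt μ * (z μ - y' μ) = 0 := by
      have h1 : (fun μ => z μ - y' μ) = L⁻¹.mulVec (hplane l' u - l'.y) := by
        funext μ
        rw [show z μ - y' μ = (z - y') μ from rfl, hz, hy'def, ← Matrix.mulVec_sub]
        congr 1
        funext ν
        simp only [Pi.sub_apply]
        ring
      calc ∑ μ, nt μ * (z μ - y' μ) = nt ⬝ᵥ (fun μ => z μ - y' μ) := rfl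
        _ = n ⬝ᵥ L.mulVec (L⁻¹.mulVec (hplane l' u - l'.y)) := by
            rw [h1, hntdef, ← Matrix.dotProduct_mulVec]
        _ = n ⬝ᵥ (hplane l' u - l'.y) := by
            rw [Matrix.mulVec_mulVec, Matrix.mul_nonsing_inv _ hU, Matrix.one_mulVec]
        _ = 0 := by
            rw [dotProduct, Fin.sum_univ_succ]
            have h0 : n 0 * (hplane l' u - l'.y) 0 = dot3 l'.α (rot3 l'.φ u) := by
              simp [hn, Pi.sub_apply, hplane_zero_apply]
            have h1 : ∀ i : Fin 3, n i.succ * (hplane l' u - l'.y) i.succ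
                = -(l'.α i * rot3 l'.φ u i) := by
              intro i
              simp [hn, Pi.sub_apply, hplane_succ_apply]
              try ring
            rw [h0, Finset.sum_congr rfl fun i _ => h1 i, Finset.sum_neg_distrib, dot3]
            ring
    funext μ
    refine Fin.cases ?_ (fun i => ?_) μ
    · show z 0 = hplane l (w u) 0
      rw [hplane_zero_apply]
      show z 0 = y' 0 + dot3 αnew (rot3 0 (w u))
      rw [rot3_zero_phi, dot3]
      rw [Fin.sum_univ_succ] at hdot
      have hsum2 : ∑ i : Fin 3, αnew i * w u i
          = (∑ i : Fin 3, -(nt i.succ * (z i.succ - y' i.succ))) / nt 0 := by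
        rw [Finset.sum_div]
        refine Finset.sum_congr rfl fun i _ => ?_
        rw [hαnewdef, hzy i, div_mul_eq_mul_div]
        ring_nf
      have hgoal : z 0 - y' 0
          = (∑ i : Fin 3, -(nt i.succ * (z i.succ - y' i.succ))) / nt 0 := by
        rw [eq_div_iff hnt0, Finset.sum_neg_distrib]
        linear_combination hdot
      rw [hsum2, ← hgoal]
      ring
    · show z i.succ = hplane l (w u) i.succ
      rw [hplane_succ_apply]
      show z i.succ = y' i.succ + rot3 0 (w u) i
      rw [rot3_zero_phi, hzy i]
      ring
  have hinj0 : ∀ u, w u = 0 → u = 0 := by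
    intro u hu
    have h1 : L⁻¹.mulVec (hplane l' u - a) = L⁻¹.mulVec (l'.y - a) := by
      rw [hkey u, hu]
      funext μ
      refine Fin.cases ?_ (fun i => ?_) μ
      · rw [hplane_zero_apply]
        show y' 0 + dot3 αnew (rot3 0 0) = y' 0
        rw [rot3_zero_phi, dot3_zero_right, add_zero]
      · rw [hplane_succ_apply]
        show y' i.succ + rot3 0 0 i = y' i.succ
        rw [rot3_zero_phi]
        simp
    have h2 : hplane l' u - a = l'.y - a := by
      have h3 := congrArg (fun q => L.mulVec q) h1
      simpa [Matrix.mulVec_mulVec, Matrix.mul_nonsing_inv _ hU, Matrix.one_mulVec] using h3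
    have h3 : rot3 l'.φ u = 0 := by
      funext i
      have h4 := congrFun h2 i.succ
      simp only [Pi.sub_apply, hplane_succ_apply] at h4
      have : rot3 l'.φ u i = 0 := by linarith
      simpa using this
    exact rot3_eq_zero h3
  refine ⟨l, IsLinearMap.mk' w hwlin, ?_, fun u => by simpa using hkey u⟩
  rw [injective_iff_map_eq_zero]
  intro u hu
  exact hinj0 u (by simpa using hu)

end Aux4
section Aux5

lemma enorm3_nonneg (v : Fin 3 → ℝ) : 0 ≤ enorm3 v := Real.sqrt_nonneg _

lemma norm_le_enorm3 (v : Fin 3 → ℝ) : ‖v‖ ≤ enorm3 v := by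
  rw [pi_norm_le_iff_of_nonneg (enorm3_nonneg v)]
  intro i
  rw [Real.norm_eq_abs, ← Real.sqrt_sq_eq_abs]
  exact Real.sqrt_le_sqrt
    (Finset.single_le_sum (fun j _ => sq_nonneg (v j)) (Finset.mem_univ i))

lemma enorm3_le_sqrt3_norm (v : Fin 3 → ℝ) : enorm3 v ≤ Real.sqrt 3 * ‖v‖ := by
  have h1 : ∑ i, v i ^ 2 ≤ 3 * ‖v‖ ^ 2 := by
    have hb : ∀ i : Fin 3, v i ^ 2 ≤ ‖v‖ ^ 2 := by
      intro i
      have h2 := norm_le_pi_norm v i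
      rw [Real.norm_eq_abs] at h2
      calc v i ^ 2 = |v i| ^ 2 := (sq_abs _).symm
        _ ≤ ‖v‖ ^ 2 := by nlinarith [abs_nonneg (v i)]
    calc ∑ i, v i ^ 2 ≤ ∑ _i : Fin 3, ‖v‖ ^ 2 := Finset.sum_le_sum fun i _ => hb i
      _ = 3 * ‖v‖ ^ 2 := by
          simp [Finset.sum_const]
          try ring
  calc enorm3 v ≤ Real.sqrt (3 * ‖v‖ ^ 2) := Real.sqrt_le_sqrt h1
    _ = Real.sqrt 3 * ‖v‖ := by
        rw [Real.sqrt_mul (by norm_num), Real.sqrt_sq (norm_nonneg v)]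

lemma cnorm2_nonneg (v : Fin 4 → ℂ) : 0 ≤ cnorm2 v :=
  Finset.sum_nonneg fun i _ => Complex.normSq_nonneg _

lemma cnorm2_mulVec_le (S : Matrix (Fin 4) (Fin 4) ℂ) (w : Fin 4 → ℂ) :
    cnorm2 (S.mulVec w) ≤ (∑ i, ∑ j, ‖S i j‖ ^ 2) * cnorm2 w := by
  unfold cnorm2
  rw [Finset.sum_mul]
  refine Finset.sum_le_sum fun i _ => ?_
  have h1 : Complex.normSq (S.mulVec w i) = ‖S.mulVec w i‖ ^ 2 :=
    (Complex.sq_norm _).symm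
  rw [h1]
  have h2 : ‖S.mulVec w i‖ ≤ ∑ j, ‖S i j‖ * ‖w j‖ := by
    have h2a : S.mulVec w i = ∑ j, S i j * w j := rfl
    rw [h2a]
    refine le_trans (norm_sum_le _ _) (le_of_eq ?_)
    refine Finset.sum_congr rfl fun j _ => ?_
    rw [norm_mul]
  have h3 : ‖S.mulVec w i‖ ^ 2
      ≤ (∑ j, ‖S i j‖ * ‖w j‖) ^ 2 := by
    apply pow_le_pow_left₀ (norm_nonneg _) h2
  refine h3.trans ?_
  refine (Finset.sum_mul_sq_le_sq_mul_sq _ _ _).trans (le_of_eq ?_)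
  congr 1
  exact Finset.sum_congr rfl fun j _ => (Complex.sq_norm _)

lemma memLp_comp_linear {f : (Fin 3 → ℝ) →ₗ[ℝ] (Fin 3 → ℝ)} (hf : Function.Injective f)
    {g : (Fin 3 → ℝ) → Fin 4 → ℂ} (hg : MemLp g 2 volume) :
    MemLp (fun u => g (f u)) 2 volume := by
  have hbij : Function.Bijective f := ⟨hf, LinearMap.injective_iff_surjective.mp hf⟩
  let e : (Fin 3 → ℝ) ≃ₗ[ℝ] (Fin 3 → ℝ) := LinearEquiv.ofBijective f hbij
  let ce : (Fin 3 → ℝ) ≃L[ℝ] (Fin 3 → ℝ) := e.toContinuousLinearEquiv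
  have hdet : LinearMap.det f ≠ 0 := by
    have h1 : IsUnit (LinearMap.det (e : (Fin 3 → ℝ) →ₗ[ℝ] (Fin 3 → ℝ))) :=
      LinearEquiv.isUnit_det' e
    have h2 : (e : (Fin 3 → ℝ) →ₗ[ℝ] (Fin 3 → ℝ)) = f := rfl
    rw [h2] at h1
    exact h1.ne_zero
  have hmap : Measure.map (⇑f) volume
      = ENNReal.ofReal |(LinearMap.det f)⁻¹| • volume :=
    Real.map_linearMap_volume_pi_eq_smul_volume_pi hdet
  have h1 : MemLp g 2 (Measure.map (⇑f) volume) := by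
    rw [hmap]
    exact hg.smul_measure ENNReal.ofReal_ne_top
  have hemb : MeasurableEmbedding (⇑f) := ce.toHomeomorph.measurableEmbedding
  exact hemb.memLp_map_measure_iff.mp h1

lemma decay_comp_linear {f : (Fin 3 → ℝ) →ₗ[ℝ] (Fin 3 → ℝ)} (hf : Function.Injective f)
    {g h : (Fin 3 → ℝ) → ℝ} (hgnn : ∀ u, 0 ≤ g u) (hhnn : ∀ u, 0 ≤ h u)
    {C : ℝ} (hC : 0 ≤ C) (hbound : ∀ u, h u ≤ C * g (f u))
    (hg : Tendsto (fun u => enorm3 u ^ 3 * g u) (cocompact (Fin 3 → ℝ)) (nhds 0)) :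
    Tendsto (fun u => enorm3 u ^ 3 * h u) (cocompact (Fin 3 → ℝ)) (nhds 0) := by
  have hbij : Function.Bijective f := ⟨hf, LinearMap.injective_iff_surjective.mp hf⟩
  let e : (Fin 3 → ℝ) ≃ₗ[ℝ] (Fin 3 → ℝ) := LinearEquiv.ofBijective f hbij
  let ce : (Fin 3 → ℝ) ≃L[ℝ] (Fin 3 → ℝ) := e.toContinuousLinearEquiv
  set D : ℝ := Real.sqrt 3 * ‖(ce.symm : (Fin 3 → ℝ) →L[ℝ] (Fin 3 → ℝ))‖ with hD
  have hDnn : 0 ≤ D := mul_nonneg (Real.sqrt_nonneg _) (norm_nonneg _)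
  have hup : ∀ u, enorm3 u ≤ D * enorm3 (f u) := by
    intro u
    have h1 : u = ce.symm (f u) := by
      have : ce u = f u := rfl
      rw [← this, ContinuousLinearEquiv.symm_apply_apply]
    calc enorm3 u ≤ Real.sqrt 3 * ‖u‖ := enorm3_le_sqrt3_norm u
      _ ≤ Real.sqrt 3 * (‖(ce.symm : (Fin 3 → ℝ) →L[ℝ] (Fin 3 → ℝ))‖ * ‖f u‖) := by
          apply mul_le_mul_of_nonneg_left _ (Real.sqrt_nonneg 3)
          calc ‖u‖ = ‖ce.symm (f u)‖ := by rw [← h1]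
            _ ≤ ‖(ce.symm : (Fin 3 → ℝ) →L[ℝ] (Fin 3 → ℝ))‖ * ‖f u‖ :=
              (ce.symm : (Fin 3 → ℝ) →L[ℝ] (Fin 3 → ℝ)).le_opNorm _
      _ ≤ D * enorm3 (f u) := by
          rw [hD, mul_assoc]
          apply mul_le_mul_of_nonneg_left _ (Real.sqrt_nonneg 3)
          exact mul_le_mul_of_nonneg_left (norm_le_enorm3 _) (norm_nonneg _)
  have hcoc : Tendsto (⇑f) (cocompact (Fin 3 → ℝ)) (cocompact (Fin 3 → ℝ)) :=
    (ce.toHomeomorph.map_cocompact).le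
  have htend0 : Tendsto (fun u => enorm3 (f u) ^ 3 * g (f u))
      (cocompact (Fin 3 → ℝ)) (nhds 0) := hg.comp hcoc
  have htend : Tendsto (fun u => (D ^ 3 * C) * (enorm3 (f u) ^ 3 * g (f u)))
      (cocompact (Fin 3 → ℝ)) (nhds 0) := by
    have := htend0.const_mul (D ^ 3 * C)
    simpa using this
  apply squeeze_zero (fun u => mul_nonneg (pow_nonneg (enorm3_nonneg u) 3) (hhnn u)) _ htend
  intro u
  calc enorm3 u ^ 3 * h u ≤ (D * enorm3 (f u)) ^ 3 * (C * g (f u)) := by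
        apply mul_le_mul
        · exact pow_le_pow_left₀ (enorm3_nonneg u) (hup u) 3
        · exact hbound u
        · exact hhnn u
        · exact pow_nonneg (mul_nonneg hDnn (enorm3_nonneg _)) 3
    _ = (D ^ 3 * C) * (enorm3 (f u) ^ 3 * g (f u)) := by ring

end Aux5
section Aux6

lemma sum_mulVec'' {ι : Type*} (s : Finset ι) (f : ι → Matrix (Fin 4) (Fin 4) ℂ)
    (v : Fin 4 → ℂ) : (∑ i ∈ s, f i).mulVec v = ∑ i ∈ s, (f i).mulVec v := by
  let φ : Matrix (Fin 4) (Fin 4) ℂ →+ (Fin 4 → ℂ) :=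
    AddMonoidHom.mk' (fun M => M.mulVec v) (fun M N => Matrix.add_mulVec M N v)
  exact map_sum φ f s

lemma real_smul_vec (r : ℝ) (v : Fin 4 → ℂ) : r • v = (r : ℂ) • v := by
  funext i
  simp [Complex.real_smul]

lemma spin_key {L : Matrix (Fin 4) (Fin 4) ℝ} {S : Matrix (Fin 4) (Fin 4) ℂ}
    (hL : IsLorentz L) (hS : IsSpinRep L S) (ν : Fin 4) :
    ∑ μ : Fin 4, (L⁻¹ ν μ : ℂ) • (gmm μ * S) = S * gmm ν := by
  have hU : IsUnit L.det := hL.isUnit_det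
  have h1 : ∀ μ, gmm μ * S = S * ∑ ρ : Fin 4, (L μ ρ : ℂ) • gmm ρ := by
    intro μ
    have h2 := hS.2.1 μ
    calc gmm μ * S = S * (S⁻¹ * gmm μ * S) := by
          rw [← Matrix.mul_assoc, ← Matrix.mul_assoc, Matrix.mul_nonsing_inv _ hS.1,
            Matrix.one_mul]
      _ = S * ∑ ρ : Fin 4, (L μ ρ : ℂ) • gmm ρ := by rw [h2]
  have hinvL : ∀ ρ : Fin 4, (∑ μ : Fin 4, (L⁻¹ ν μ : ℂ) * (L μ ρ : ℂ))
      = if ν = ρ then 1 else 0 := by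
    intro ρ
    have h3 : (L⁻¹ * L) ν ρ = if ν = ρ then 1 else 0 := by
      rw [Matrix.nonsing_inv_mul _ hU, Matrix.one_apply]
    have h4 : ((L⁻¹ * L) ν ρ : ℂ) = ∑ μ : Fin 4, (L⁻¹ ν μ : ℂ) * (L μ ρ : ℂ) := by
      rw [Matrix.mul_apply]
      push_cast
      rfl
    rw [← h4, h3]
    split <;> norm_num
  calc ∑ μ : Fin 4, (L⁻¹ ν μ : ℂ) • (gmm μ * S)
      = ∑ μ : Fin 4, (L⁻¹ ν μ : ℂ) • (S * ∑ ρ : Fin 4, (L μ ρ : ℂ) • gmm ρ) :=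
        Finset.sum_congr rfl fun μ _ => by rw [h1 μ]
    _ = ∑ μ : Fin 4, ∑ ρ : Fin 4, ((L⁻¹ ν μ : ℂ) * (L μ ρ : ℂ)) • (S * gmm ρ) := by
        refine Finset.sum_congr rfl fun μ _ => ?_
        rw [Finset.mul_sum, Finset.smul_sum]
        refine Finset.sum_congr rfl fun ρ _ => ?_
        rw [Matrix.mul_smul, smul_smul]
    _ = ∑ ρ : Fin 4, (∑ μ : Fin 4, (L⁻¹ ν μ : ℂ) * (L μ ρ : ℂ)) • (S * gmm ρ) := by
        rw [Finset.sum_comm]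
        exact Finset.sum_congr rfl fun ρ _ => (Finset.sum_smul).symm
    _ = ∑ ρ : Fin 4, (if ν = ρ then (1:ℂ) else 0) • (S * gmm ρ) :=
        Finset.sum_congr rfl fun ρ _ => by rw [hinvL ρ]
    _ = S * gmm ν := by
        simp only [ite_smul, one_smul, zero_smul]
        rw [Finset.sum_ite_eq Finset.univ ν (fun ρ => S * gmm ρ)]
        simp

lemma spin_key_vec {L : Matrix (Fin 4) (Fin 4) ℝ} {S : Matrix (Fin 4) (Fin 4) ℂ}
    (hL : IsLorentz L) (hS : IsSpinRep L S) (ν : Fin 4) (D : Fin 4 → ℂ) :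
    ∑ μ : Fin 4, (L⁻¹ ν μ : ℂ) • (gmm μ).mulVec (S.mulVec D)
      = S.mulVec ((gmm ν).mulVec D) := by
  calc ∑ μ : Fin 4, (L⁻¹ ν μ : ℂ) • (gmm μ).mulVec (S.mulVec D)
      = ∑ μ : Fin 4, ((L⁻¹ ν μ : ℂ) • (gmm μ * S)).mulVec D := by
        refine Finset.sum_congr rfl fun μ _ => ?_
        rw [Matrix.mulVec_mulVec, Matrix.smul_mulVec]
    _ = (∑ μ : Fin 4, (L⁻¹ ν μ : ℂ) • (gmm μ * S)).mulVec D := (sum_mulVec'' _ _ _).symm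
    _ = (S * gmm ν).mulVec D := by rw [spin_key hL hS ν]
    _ = S.mulVec ((gmm ν).mulVec D) := (Matrix.mulVec_mulVec _ _ _).symm

end Aux6
section Aux7

variable {L : Matrix (Fin 4) (Fin 4) ℝ} {S : Matrix (Fin 4) (Fin 4) ℂ} {a : Fin 4 → ℝ}

/-- The continuous linear map x ↦ L⁻¹ *ᵥ x. -/
def cLmap (L : Matrix (Fin 4) (Fin 4) ℝ) : (Fin 4 → ℝ) →L[ℝ] (Fin 4 → ℝ) :=
  (Matrix.mulVecLin L⁻¹).toContinuousLinearMap

/-- The continuous linear map w ↦ S *ᵥ w, as a real-linear map. -/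
def cSmap (S : Matrix (Fin 4) (Fin 4) ℂ) : (Fin 4 → ℂ) →L[ℝ] (Fin 4 → ℂ) :=
  ((Matrix.mulVecLin S).restrictScalars ℝ).toContinuousLinearMap

lemma cLmap_apply (L : Matrix (Fin 4) (Fin 4) ℝ) (x : Fin 4 → ℝ) :
    cLmap L x = L⁻¹.mulVec x := rfl

lemma cSmap_apply (S : Matrix (Fin 4) (Fin 4) ℂ) (w : Fin 4 → ℂ) :
    cSmap S w = S.mulVec w := rfl

lemma gmap_hasFDeriv (x : Fin 4 → ℝ) :
    HasFDerivAt (fun x : Fin 4 → ℝ => L⁻¹.mulVec (x - a)) (cLmap L) x := by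
  have h1 : HasFDerivAt (fun x : Fin 4 → ℝ => x - a) (ContinuousLinearMap.id ℝ _) x :=
    (hasFDerivAt_id x).sub_const a
  have h2 := (cLmap L).hasFDerivAt (x := x - a)
  have h3 := h2.comp x h1
  rw [ContinuousLinearMap.comp_id] at h3
  exact h3

lemma poinc_contDiff (Ψ : (Fin 4 → ℝ) → Fin 4 → ℂ) (hΨ : ContDiff ℝ 1 Ψ) :
    ContDiff ℝ 1 (poinc L S a Ψ) := by
  have h1 : ContDiff ℝ 1 (fun x : Fin 4 → ℝ => L⁻¹.mulVec (x - a)) := by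
    have := (cLmap L).contDiff (n := 1)
    exact this.comp (contDiff_id.sub contDiff_const)
  have h2 : ContDiff ℝ 1 (fun x : Fin 4 → ℝ => cSmap S (Ψ (L⁻¹.mulVec (x - a)))) :=
    ((cSmap S).contDiff).comp (hΨ.comp h1)
  exact h2

lemma poinc_fderiv (Ψ : (Fin 4 → ℝ) → Fin 4 → ℂ) (hΨ : ContDiff ℝ 1 Ψ) (x : Fin 4 → ℝ) :
    fderiv ℝ (poinc L S a Ψ) x
      = ((cSmap S).comp ((fderiv ℝ Ψ (L⁻¹.mulVec (x - a))).comp (cLmap L))) := by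
  have hΨd : Differentiable ℝ Ψ := hΨ.differentiable one_ne_zero
  have h4 : HasFDerivAt Ψ (fderiv ℝ Ψ (L⁻¹.mulVec (x - a))) (L⁻¹.mulVec (x - a)) :=
    (hΨd _).hasFDerivAt
  have h5 := ((cSmap S).hasFDerivAt (x := Ψ (L⁻¹.mulVec (x - a)))).comp x
    (h4.comp x (gmap_hasFDeriv x))
  have h6 : poinc L S a Ψ = (fun w => cSmap S w) ∘ Ψ ∘ (fun x => L⁻¹.mulVec (x - a)) := rfl
  rw [h6]
  exact h5.fderiv

end Aux7
section Aux8

lemma mulVec_sum_vec {ι : Type*} (s : Finset ι) (A : Matrix (Fin 4) (Fin 4) ℂ)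
    (v : ι → Fin 4 → ℂ) : A.mulVec (∑ i ∈ s, v i) = ∑ i ∈ s, A.mulVec (v i) := by
  rw [← Matrix.mulVecLin_apply, map_sum]
  simp [Matrix.mulVecLin_apply]

lemma dirac_transport (m c hb q : ℝ) (A : (Fin 4 → ℝ) → Fin 4 → ℝ)
    {L : Matrix (Fin 4) (Fin 4) ℝ} {S : Matrix (Fin 4) (Fin 4) ℂ} {a : Fin 4 → ℝ}
    (hL : IsLorentz L) (hS : IsSpinRep L S)
    (Ψ : (Fin 4 → ℝ) → Fin 4 → ℂ) (hΨ1 : ContDiff ℝ 1 Ψ) (x : Fin 4 → ℝ) :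
    diracLHS m c hb q (lorPot L a A) (poinc L S a Ψ) x
      = S.mulVec (diracLHS m c hb q A Ψ (L⁻¹.mulVec (x - a))) := by
  set gx : Fin 4 → ℝ := L⁻¹.mulVec (x - a) with hgx
  set D : Fin 4 → (Fin 4 → ℂ) := fun ν => fderiv ℝ Ψ gx (Pi.single ν 1) with hD
  have hder : ∀ μ : Fin 4, fderiv ℝ (poinc L S a Ψ) x (Pi.single μ 1)
      = S.mulVec (∑ ν : Fin 4, (L⁻¹ ν μ : ℂ) • D ν) := by
    intro μ
    rw [poinc_fderiv Ψ hΨ1 x]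
    rw [ContinuousLinearMap.comp_apply, ContinuousLinearMap.comp_apply]
    have h1 : cLmap L (Pi.single μ 1) = fun ν => L⁻¹ ν μ := by
      rw [cLmap_apply, Matrix.mulVec_single]
      funext ν
      simp
    rw [h1]
    have h2 : (fun ν => L⁻¹ ν μ) = ∑ ν : Fin 4, L⁻¹ ν μ • (Pi.single ν 1 : Fin 4 → ℝ) := by
      funext ρ
      rw [Finset.sum_apply]
      simp [Pi.single_apply]
    rw [h2]
    have h3 : fderiv ℝ Ψ gx (∑ ν : Fin 4, L⁻¹ ν μ • (Pi.single ν 1 : Fin 4 → ℝ))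
        = ∑ ν : Fin 4, (L⁻¹ ν μ : ℂ) • D ν := by
      rw [map_sum]
      refine Finset.sum_congr rfl fun ν _ => ?_
      rw [ContinuousLinearMap.map_smul, real_smul_vec]
    rw [h3, cSmap_apply]
  have h4 : ∑ μ : Fin 4, (gmm μ).mulVec (fderiv ℝ (poinc L S a Ψ) x (Pi.single μ 1))
      = S.mulVec (∑ ν : Fin 4, (gmm ν).mulVec (D ν)) := by
    calc ∑ μ : Fin 4, (gmm μ).mulVec (fderiv ℝ (poinc L S a Ψ) x (Pi.single μ 1))
        = ∑ μ : Fin 4, ∑ ν : Fin 4, (L⁻¹ ν μ : ℂ) • (gmm μ).mulVec (S.mulVec (D ν)) := by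
          refine Finset.sum_congr rfl fun μ _ => ?_
          rw [hder μ, mulVec_sum_vec, mulVec_sum_vec]
          refine Finset.sum_congr rfl fun ν _ => ?_
          rw [Matrix.mulVec_smul, Matrix.mulVec_smul]
      _ = ∑ ν : Fin 4, ∑ μ : Fin 4, (L⁻¹ ν μ : ℂ) • (gmm μ).mulVec (S.mulVec (D ν)) :=
          Finset.sum_comm
      _ = ∑ ν : Fin 4, S.mulVec ((gmm ν).mulVec (D ν)) :=
          Finset.sum_congr rfl fun ν _ => spin_key_vec hL hS ν (D ν)
      _ = S.mulVec (∑ ν : Fin 4, (gmm ν).mulVec (D ν)) := (mulVec_sum_vec _ _ _).symm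
  have hpoinc : poinc L S a Ψ x = S.mulVec (Ψ gx) := rfl
  have h5 : ∑ μ : Fin 4, ((minkSign μ * lorPot L a A x μ : ℝ) : ℂ)
        • (gmm μ).mulVec (poinc L S a Ψ x)
      = S.mulVec (∑ ν : Fin 4, ((minkSign ν * A gx ν : ℝ) : ℂ)
        • (gmm ν).mulVec (Ψ gx)) := by
    have hcoef : ∀ μ : Fin 4, minkSign μ * lorPot L a A x μ
        = ∑ ν : Fin 4, L⁻¹ ν μ * (minkSign ν * A gx ν) := by
      intro μ
      show minkSign μ * (minkSign μ * ∑ ν : Fin 4, L⁻¹ ν μ * (minkSign ν * A gx ν)) = _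
      rw [← mul_assoc, minkSign_mul_self, one_mul]
    calc ∑ μ : Fin 4, ((minkSign μ * lorPot L a A x μ : ℝ) : ℂ)
          • (gmm μ).mulVec (poinc L S a Ψ x)
        = ∑ μ : Fin 4, ∑ ν : Fin 4, ((minkSign ν * A gx ν : ℝ) : ℂ)
            • ((L⁻¹ ν μ : ℂ) • (gmm μ).mulVec (S.mulVec (Ψ gx))) := by
          refine Finset.sum_congr rfl fun μ _ => ?_
          rw [hpoinc, hcoef μ]
          push_cast
          rw [Finset.sum_smul]
          refine Finset.sum_congr rfl fun ν _ => ?_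
          rw [smul_smul]
          congr 1
          ring
      _ = ∑ ν : Fin 4, ((minkSign ν * A gx ν : ℝ) : ℂ)
            • (∑ μ : Fin 4, (L⁻¹ ν μ : ℂ) • (gmm μ).mulVec (S.mulVec (Ψ gx))) := by
          rw [Finset.sum_comm]
          exact Finset.sum_congr rfl fun ν _ => (Finset.smul_sum).symm
      _ = ∑ ν : Fin 4, ((minkSign ν * A gx ν : ℝ) : ℂ)
            • S.mulVec ((gmm ν).mulVec (Ψ gx)) :=
          Finset.sum_congr rfl fun ν _ => by rw [spin_key_vec hL hS ν (Ψ gx)]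
      _ = S.mulVec (∑ ν : Fin 4, ((minkSign ν * A gx ν : ℝ) : ℂ)
            • (gmm ν).mulVec (Ψ gx)) := by
          rw [mulVec_sum_vec]
          exact Finset.sum_congr rfl fun ν _ => (Matrix.mulVec_smul _ _ _).symm
  show Complex.I • (∑ μ : Fin 4, (gmm μ).mulVec (fderiv ℝ (poinc L S a Ψ) x (Pi.single μ 1)))
      - ((q / (c * hb) : ℝ) : ℂ) • (∑ μ : Fin 4, ((minkSign μ * lorPot L a A x μ : ℝ) : ℂ)
          • (gmm μ).mulVec (poinc L S a Ψ x))
      - ((m * c / hb : ℝ) : ℂ) • poinc L S a Ψ x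
    = S.mulVec (diracLHS m c hb q A Ψ gx)
  rw [h4, h5, hpoinc]
  show _ = S.mulVec (Complex.I • (∑ ν : Fin 4, (gmm ν).mulVec (D ν))
      - ((q / (c * hb) : ℝ) : ℂ) • (∑ ν : Fin 4, ((minkSign ν * A gx ν : ℝ) : ℂ)
          • (gmm ν).mulVec (Ψ gx))
      - ((m * c / hb : ℝ) : ℂ) • Ψ gx)
  rw [Matrix.mulVec_sub, Matrix.mulVec_sub, Matrix.mulVec_smul, Matrix.mulVec_smul,
    Matrix.mulVec_smul]

end Aux8
/-- Theorem 7: if Ψ ∈ ℌ (with potential A), then its Poincaré transform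
Ψ̃(x̃) = S(Λ)Ψ(Λ⁻¹(x̃ − a)) belongs to ℌ̃, defined with the transformed potential Ã. -/
theorem poincare_transform_mem_H
    (m c hb e : ℝ) (hm : 0 < m) (hc : 0 < c) (hhb : 0 < hb)
    (A : (Fin 4 → ℝ) → Fin 4 → ℝ) (hA : Continuous A)
    (L : Matrix (Fin 4) (Fin 4) ℝ) (S : Matrix (Fin 4) (Fin 4) ℂ) (a : Fin 4 → ℝ)
    (hL : IsLorentz L) (hS : IsSpinRep L S)
    (Ψ : (Fin 4 → ℝ) → Fin 4 → ℂ) (hΨ : memH m c hb e A Ψ) :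
    memH m c hb e (lorPot L a A) (poinc L S a Ψ) := by
  obtain ⟨hC1, hDir, hLp, hDec⟩ := hΨ
  refine ⟨poinc_contDiff Ψ hC1, ?_, ?_, ?_⟩
  · intro x
    rw [dirac_transport m c hb e A hL hS Ψ hC1 x, hDir _, Matrix.mulVec_zero]
  · intro l'
    obtain ⟨l, f, hfinj, hkey⟩ := plane_transport hL a l'
    have h1 : (fun u => poinc L S a Ψ (hplane l' u))
        = fun u => cSmap S (Ψ (hplane l (f u))) := by
      funext u
      show S.mulVec (Ψ (L⁻¹.mulVec (hplane l' u - a))) = _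
      rw [hkey u, cSmap_apply]
    rw [h1]
    have h2 : MemLp (fun u => Ψ (hplane l (f u))) 2 volume :=
      memLp_comp_linear hfinj (hLp l)
    exact (cSmap S).comp_memLp' h2
  · intro l'
    obtain ⟨l, f, hfinj, hkey⟩ := plane_transport hL a l'
    have h1 : ∀ u, poinc L S a Ψ (hplane l' u) = S.mulVec (Ψ (hplane l (f u))) := by
      intro u
      show S.mulVec (Ψ (L⁻¹.mulVec (hplane l' u - a))) = _
      rw [hkey u]
    have hKS : (0:ℝ) ≤ ∑ i, ∑ j, ‖S i j‖ ^ 2 := by positivity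
    exact decay_comp_linear hfinj (g := fun v => cnorm2 (Ψ (hplane l v)))
      (h := fun u => cnorm2 (poinc L S a Ψ (hplane l' u)))
      (fun v => cnorm2_nonneg _) (fun u => cnorm2_nonneg _) hKS
      (fun u => by beta_reduce; rw [h1 u]; exact cnorm2_mulVec_le S _) (hDec l)

end
end

section
/- (Charge conjugation, parts (i) and (ii)) Let C = i γ² γ⁰. (i) If Ψ ∈ ℌ (defined with charge e), then Ψ^C := C (γ⁰)ᵀ Ψ*, where Ψ* is the componentwise complex conjugate, belongs to ℌ^C, the space defined in the same way as ℌ but with e replaced by −e. (ii) If F ∈ ℋ, then F^C := C (γ⁰)ᵀ F* belongs to ℋ^C, the space defined in the same way as ℋ but with e replaced by −e. -/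
open MeasureTheory Filter Matrix

noncomputable section

/-- The charge-conjugation matrix C = i γ² γ⁰ in the Dirac representation. -/
def Cmat : Matrix (Fin 4) (Fin 4) ℂ := Complex.I • (gmm 2 * gmm 0)

/-- The charge conjugate wave function Ψ^C = C (γ⁰)ᵀ Ψ* (componentwise conjugation). -/
def chargeConj (F : (Fin 4 → ℝ) → Fin 4 → ℂ) : (Fin 4 → ℝ) → Fin 4 → ℂ :=
  fun x => (Cmat * (gmm 0)ᵀ).mulVec (star (F x))


/-! ### Auxiliary material for the proof -/

/-- The conjugation map `v ↦ C (γ⁰)ᵀ v*` written out explicitly. -/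
def LCfun (v : Fin 4 → ℂ) : Fin 4 → ℂ := ![star (v 3), -star (v 2), -star (v 1), star (v 0)]

lemma mulVec_M (v : Fin 4 → ℂ) : (Cmat * (gmm 0)ᵀ).mulVec (star v) = LCfun v := by
  have hM : Cmat * (gmm 0)ᵀ = !![0,0,0,1; 0,0,-1,0; 0,-1,0,0; 1,0,0,0] := by
    ext i j
    fin_cases i <;> fin_cases j <;>
      simp [Cmat, gmm, Matrix.mul_apply, Matrix.transpose_apply, Fin.sum_univ_four,
        Matrix.vecHead, Matrix.vecTail, Complex.I_mul_I]
  rw [hM]; funext i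
  fin_cases i <;> simp [LCfun, Matrix.mulVec, dotProduct, Fin.sum_univ_four, Matrix.vecHead, Matrix.vecTail]

lemma chargeConj_apply (F : (Fin 4 → ℝ) → Fin 4 → ℂ) (x : Fin 4 → ℝ) :
    chargeConj F x = LCfun (F x) := mulVec_M (F x)

lemma LCfun_add (v w : Fin 4 → ℂ) : LCfun (v + w) = LCfun v + LCfun w := by
  funext i; fin_cases i <;> simp [LCfun] <;> ring

lemma LCfun_sub (v w : Fin 4 → ℂ) : LCfun (v - w) = LCfun v - LCfun w := by
  funext i; fin_cases i <;> simp [LCfun] <;> ring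

lemma LCfun_smul (z : ℂ) (v : Fin 4 → ℂ) : LCfun (z • v) = star z • LCfun v := by
  funext i; fin_cases i <;> simp [LCfun]

lemma LCfun_zero : LCfun 0 = 0 := by
  funext i; fin_cases i <;> simp [LCfun]

lemma gmm_LCfun (μ : Fin 4) (v : Fin 4 → ℂ) :
    (gmm μ).mulVec (LCfun v) = - LCfun ((gmm μ).mulVec v) := by
  funext i
  fin_cases μ <;> fin_cases i <;>
    simp [LCfun, gmm, Matrix.mulVec, dotProduct, Fin.sum_univ_four, Complex.ext_iff,
      Matrix.vecHead, Matrix.vecTail]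

lemma cnorm2_LCfun (v : Fin 4 → ℂ) : cnorm2 (LCfun v) = cnorm2 v := by
  simp [cnorm2, LCfun, Fin.sum_univ_four, Complex.normSq_conj]; ring

set_option maxHeartbeats 1000000 in
lemma gmat_eq (α : Fin 3 → ℝ) : gmat α =
    !![1, 0, -(α 2:ℂ), -(α 0:ℂ) + (α 1:ℂ)*Complex.I;
       0, 1, -(α 0:ℂ) - (α 1:ℂ)*Complex.I, (α 2:ℂ);
       -(α 2:ℂ), -(α 0:ℂ) + (α 1:ℂ)*Complex.I, 1, 0;
       -(α 0:ℂ) - (α 1:ℂ)*Complex.I, (α 2:ℂ), 0, 1] := by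
  have h0 : (0:Fin 3).succ = (1:Fin 4) := rfl
  have h1 : (1:Fin 3).succ = (2:Fin 4) := rfl
  have h2 : (2:Fin 3).succ = (3:Fin 4) := rfl
  rw [gmat, Fin.sum_univ_three, h0, h1, h2]
  ext i j
  fin_cases i <;> fin_cases j <;>
    simp [gmm, Matrix.mul_apply, Fin.sum_univ_four, Matrix.one_apply, Matrix.sub_apply,
      Matrix.add_apply, Matrix.smul_apply, Matrix.vecHead, Matrix.vecTail] <;> ring

set_option maxHeartbeats 2000000 in
lemma dot_LCfun (α : Fin 3 → ℝ) (v : Fin 4 → ℂ) :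
    dotProduct (star (LCfun v)) ((gmat α).mulVec (LCfun v))
      = star (dotProduct (star v) ((gmat α).mulVec v)) := by
  rw [gmat_eq]
  simp [LCfun, Matrix.mulVec, dotProduct, Fin.sum_univ_four, Matrix.vecHead,
    Matrix.vecTail, mul_comm, mul_assoc, mul_left_comm, Complex.ext_iff]
  constructor <;> ring

/-- `LCfun` as a continuous ℝ-linear map. -/
def LCclm : (Fin 4 → ℂ) →L[ℝ] (Fin 4 → ℂ) :=
  LinearMap.toContinuousLinearMap
    { toFun := LCfun
      map_add' := LCfun_add
      map_smul' := by
        intro r v; funext i; fin_cases i <;> simp [LCfun] }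

lemma LCclm_apply (v : Fin 4 → ℂ) : LCclm v = LCfun v := rfl

lemma chargeConj_eq (F : (Fin 4 → ℝ) → Fin 4 → ℂ) : chargeConj F = fun x => LCclm (F x) :=
  funext fun x => chargeConj_apply F x

lemma fderiv_chargeConj {Ψ : (Fin 4 → ℝ) → Fin 4 → ℂ} (hΨ : ContDiff ℝ 1 Ψ)
    (x w : Fin 4 → ℝ) :
    fderiv ℝ (chargeConj Ψ) x w = LCfun (fderiv ℝ Ψ x w) := by
  have hd : DifferentiableAt ℝ Ψ x := (hΨ.differentiable one_ne_zero).differentiableAt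
  have hcomp : HasFDerivAt (fun y => LCclm (Ψ y)) (LCclm.comp (fderiv ℝ Ψ x)) x :=
    LCclm.hasFDerivAt.comp x hd.hasFDerivAt
  rw [chargeConj_eq, hcomp.fderiv]
  rfl

lemma diracLHS_chargeConj (m c hb e : ℝ) (A : (Fin 4 → ℝ) → Fin 4 → ℝ)
    {Ψ : (Fin 4 → ℝ) → Fin 4 → ℂ} (hΨ : ContDiff ℝ 1 Ψ) (x : Fin 4 → ℝ) :
    diracLHS m c hb (-e) A (chargeConj Ψ) x = LCfun (diracLHS m c hb e A Ψ x) := by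
  simp only [diracLHS, fderiv_chargeConj hΨ, chargeConj_apply]
  simp only [Fin.sum_univ_four, gmm_LCfun, LCfun_sub, LCfun_add, LCfun_smul,
    Complex.conj_I, Complex.star_def, Complex.conj_ofReal, smul_neg, neg_neg]
  push_cast [neg_div]
  module

lemma innerL_LC (α : Fin 3 → ℝ) (g : (Fin 3 → ℝ) → Fin 4 → ℂ) :
    innerL α (fun u => LCfun (g u)) (fun u => LCfun (g u)) = star (innerL α g g) := by
  rw [innerL, innerL]
  rw [show (fun u => dotProduct (star (LCfun (g u))) ((gmat α).mulVec (LCfun (g u))))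
      = fun u => (starRingEnd ℂ) (dotProduct (star (g u)) ((gmat α).mulVec (g u)))
    from funext fun u => dot_LCfun α (g u)]
  exact integral_conj

lemma normL_LC (α : Fin 3 → ℝ) (g : (Fin 3 → ℝ) → Fin 4 → ℂ) :
    normL α (fun u => LCfun (g u)) = normL α g := by
  rw [normL, normL, innerL_LC]
  simp

lemma memH_chargeConj (m c hb e : ℝ) (A : (Fin 4 → ℝ) → Fin 4 → ℝ)
    {Ψ : (Fin 4 → ℝ) → Fin 4 → ℂ} (hΨ : memH m c hb e A Ψ) :
    memH m c hb (-e) A (chargeConj Ψ) := by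
  obtain ⟨h1, h2, h3, h4⟩ := hΨ
  refine ⟨?_, ?_, ?_, ?_⟩
  · rw [chargeConj_eq]
    exact LCclm.contDiff.comp h1
  · intro x
    rw [diracLHS_chargeConj m c hb e A h1 x, h2 x, LCfun_zero]
  · intro l
    refine (LCclm.comp_memLp' (h3 l)).ae_eq ?_
    exact Filter.Eventually.of_forall fun u => (chargeConj_apply Ψ (hplane l u)).symm
  · intro l
    refine (h4 l).congr ?_
    intro u
    rw [chargeConj_apply, cnorm2_LCfun]

/-- charge conjugation, (i) and (ii): if Ψ ∈ ℌ (charge e) then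
Ψ^C = C(γ⁰)ᵀΨ* ∈ ℌ^C (charge −e), and if F ∈ ℋ then F^C ∈ ℋ^C. -/
theorem charge_conjugation_maps_spaces
    (m c hb e : ℝ) (hm : 0 < m) (hc : 0 < c) (hhb : 0 < hb)
    (A : (Fin 4 → ℝ) → Fin 4 → ℝ) (hA : Continuous A) :
    (∀ Ψ : (Fin 4 → ℝ) → Fin 4 → ℂ, memH m c hb e A Ψ → memH m c hb (-e) A (chargeConj Ψ)) ∧
    (∀ F : (Fin 4 → ℝ) → Fin 4 → ℂ, memHH m c hb e A F → memHH m c hb (-e) A (chargeConj F)) := by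
  constructor
  · exact fun Ψ hΨ => memH_chargeConj m c hb e A hΨ
  · rintro F ⟨hmeas, hlp, Ψs, hΨs, happ⟩
    refine ⟨?_, ?_, fun k => chargeConj (Ψs k), fun k => memH_chargeConj m c hb e A (hΨs k), ?_⟩
    · rw [chargeConj_eq]
      exact LCclm.continuous.measurable.comp hmeas
    · intro l
      refine (LCclm.comp_memLp' (hlp l)).ae_eq ?_
      exact Filter.Eventually.of_forall fun u => (chargeConj_apply F (hplane l u)).symm
    · intro ε hε
      obtain ⟨N, hN⟩ := happ ε hε
      refine ⟨N, fun k hk l => ?_⟩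
      have hfun : (fun u => chargeConj F (hplane l u) - chargeConj (Ψs k) (hplane l u))
          = fun u => LCfun (F (hplane l u) - Ψs k (hplane l u)) := by
        funext u
        rw [chargeConj_apply, chargeConj_apply, LCfun_sub]
      rw [hfun, normL_LC]
      exact hN k hk l


end
end
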